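/- arXiv:0806.0479 — 11 statements merged into one kernel-verified Lean document; each statement's English description precedes it below -/
import Mathlib

section
/- Let G be a subset of a nonzero ideal I of S. If G ∩ S⟨n⟩ is a Gröbner base for the ideal I ∩ S⟨n⟩ of S⟨n⟩ for infinitely many integers n, then G is a Gröbner base for I. -/
/-!
Every polynomial involves only finitely many variables, so a nonzero `f ∈ I` lies in `S⟨n⟩`
for all large `n`, in particular for one of the infinitely many `n` where `G ∩ S⟨n⟩` is a
Gröbner base of `I ∩ S⟨n⟩`. The leading term of `f` also lies in `S⟨n⟩` and belongs to the
initial ideal of `I ∩ S⟨n⟩`, hence to the ideal of `S⟨n⟩` generated by the leading monomials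
of `G ∩ S⟨n⟩`; pushing this ideal forward to `S` puts it in the ideal generated by the
leading monomials of `G`.
-/

open MvPolynomial

noncomputable section

/-- `r` is a monomial order on the monomials (finitely supported exponent vectors):
a well-order compatible with multiplication.  Here `r a b` means `x^a < x^b`. -/
def IsMonomialOrder {σ : Type*} (r : (σ →₀ ℕ) → (σ →₀ ℕ) → Prop) : Prop :=
  IsWellOrder (σ →₀ ℕ) r ∧ ∀ a b c : σ →₀ ℕ, r a b → r (c + a) (c + b)

/-- `m` is the leading monomial of the polynomial `f` with respect to the order `r`. -/
def IsLM {σ k : Type*} [CommSemiring k] (r : (σ →₀ ℕ) → (σ →₀ ℕ) → Prop)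
    (f : MvPolynomial σ k) (m : σ →₀ ℕ) : Prop :=
  m ∈ f.support ∧ ∀ m' ∈ f.support, m' ≠ m → r m' m

/-- `t` is the leading term of `f` with respect to `r`. -/
def IsLT {σ k : Type*} [CommSemiring k] (r : (σ →₀ ℕ) → (σ →₀ ℕ) → Prop)
    (f t : MvPolynomial σ k) : Prop :=
  ∃ m, IsLM r f m ∧ t = monomial m (f.coeff m)

/-- The initial ideal of `I`: the ideal generated by the leading terms of nonzero elements. -/
def initialIdeal {σ k : Type*} [CommSemiring k] (r : (σ →₀ ℕ) → (σ →₀ ℕ) → Prop)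
    (I : Ideal (MvPolynomial σ k)) : Ideal (MvPolynomial σ k) :=
  Ideal.span {t | ∃ f ∈ I, f ≠ 0 ∧ IsLT r f t}

/-- The set of leading monomials (as polynomials) of the nonzero members of `G`: `in(G)`. -/
def lmMonomials {σ k : Type*} [CommSemiring k] (r : (σ →₀ ℕ) → (σ →₀ ℕ) → Prop)
    (G : Set (MvPolynomial σ k)) : Set (MvPolynomial σ k) :=
  {t | ∃ m, (∃ g ∈ G, g ≠ 0 ∧ IsLM r g m) ∧ t = monomial m 1}

/-- `G ⊆ I` is a Gröbner base for `I`: the leading monomials of members of `G`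
generate the initial ideal of `I`. -/
def IsGroebnerBasis {σ k : Type*} [CommSemiring k] (r : (σ →₀ ℕ) → (σ →₀ ℕ) → Prop)
    (G : Set (MvPolynomial σ k)) (I : Ideal (MvPolynomial σ k)) : Prop :=
  G ⊆ ↑I ∧ Ideal.span (lmMonomials r G) = initialIdeal r I

/-- `S⟨n⟩ = k[x₀, …, xₙ₋₁]`, the subalgebra of polynomials in the first `n` variables. -/
def Sn (k : Type*) [CommSemiring k] (n : ℕ) : Subalgebra k (MvPolynomial ℕ k) :=
  MvPolynomial.supported k {i | i < n}

/-- The initial ideal of an ideal `J` of `S⟨n⟩`, computed inside `S⟨n⟩`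
(with the restricted monomial order). -/
def initialIdealIn {k : Type*} [CommSemiring k] (r : (ℕ →₀ ℕ) → (ℕ →₀ ℕ) → Prop)
    (n : ℕ) (J : Ideal ↥(Sn k n)) : Ideal ↥(Sn k n) :=
  Ideal.span {t | ∃ f ∈ J, f ≠ 0 ∧ IsLT r (f : MvPolynomial ℕ k) (t : MvPolynomial ℕ k)}

/-- The ideal `I ∩ S⟨n⟩` of `S⟨n⟩`. -/
def interIdeal {k : Type*} [CommSemiring k] (I : Ideal (MvPolynomial ℕ k)) (n : ℕ) :
    Ideal ↥(Sn k n) :=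
  Ideal.comap (Sn k n).subtype I

/-- A subset `G` of `S` lying in `S⟨n⟩` is a Gröbner base for the ideal `J` of `S⟨n⟩`. -/
def IsGroebnerBasisIn {k : Type*} [CommSemiring k] (r : (ℕ →₀ ℕ) → (ℕ →₀ ℕ) → Prop)
    (n : ℕ) (G : Set (MvPolynomial ℕ k)) (J : Ideal ↥(Sn k n)) : Prop :=
  (∀ g ∈ G, ∃ hg : g ∈ Sn k n, (⟨g, hg⟩ : ↥(Sn k n)) ∈ J) ∧
  Ideal.span {t : ↥(Sn k n) | ∃ m, (∃ g ∈ G, g ≠ 0 ∧ IsLM r g m) ∧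
      (t : MvPolynomial ℕ k) = monomial m 1} = initialIdealIn r n J

/-- `f'` is a remainder of `f` on division by `G` with respect to the order `r`. -/
def IsRemainder {σ k : Type*} [CommSemiring k] (r : (σ →₀ ℕ) → (σ →₀ ℕ) → Prop)
    (G : Set (MvPolynomial σ k)) (f f' : MvPolynomial σ k) : Prop :=
  (∃ (s : ℕ) (g q : Fin s → MvPolynomial σ k),
    (∀ i, g i ∈ G) ∧
    f = (∑ i, q i * g i) + f' ∧
    ∀ i, q i * g i ≠ 0 → ∀ m m', IsLM r (q i * g i) m → IsLM r f m' → m = m' ∨ r m m') ∧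
  ∀ m ∈ f'.support, (monomial m 1 : MvPolynomial σ k) ∉ Ideal.span (lmMonomials r G)

/-- `G` is a reduced Gröbner base for `I`: every member is monic and no leading monomial
of a member divides any term of another member. -/
def IsReducedGB {σ k : Type*} [CommSemiring k] (r : (σ →₀ ℕ) → (σ →₀ ℕ) → Prop)
    (G : Set (MvPolynomial σ k)) (I : Ideal (MvPolynomial σ k)) : Prop :=
  IsGroebnerBasis r G I ∧
  (∀ g ∈ G, ∃ m, IsLM r g m ∧ MvPolynomial.coeff m g = 1) ∧
  (∀ g ∈ G, ∀ h ∈ G, g ≠ h → ∀ m, IsLM r g m → ∀ m' ∈ h.support, ¬ m ≤ m')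

/-- A regular sequence indexed by an ordered set `(Ω, lt)`. -/
def IsRegularSeq {R : Type*} [CommRing R] {Ω : Type*} (lt : Ω → Ω → Prop) (f : Ω → R) : Prop :=
  Ideal.span (Set.range f) ≠ ⊤ ∧
  ∀ α : Ω, ∀ h : R, h * f α ∈ Ideal.span (f '' {β | lt β α}) →
    h ∈ Ideal.span (f '' {β | lt β α})

/-- The FR-condition: every finite strictly increasing subfamily is a regular sequence
in this order. -/
def SatisfiesFR {R : Type*} [CommRing R] {Ω : Type*} (lt : Ω → Ω → Prop) (f : Ω → R) : Prop :=
  ∀ (n : ℕ) (α : Fin n → Ω), (∀ i j : Fin n, i < j → lt (α i) (α j)) →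
    IsRegularSeq (· < ·) (fun i => f (α i))

theorem span_lmMonomials_le_initialIdeal {σ k : Type*} [Field k]
    {r : (σ →₀ ℕ) → (σ →₀ ℕ) → Prop} {G : Set (MvPolynomial σ k)}
    {I : Ideal (MvPolynomial σ k)} (hG : G ⊆ I) :
    Ideal.span (lmMonomials r G) ≤ initialIdeal r I := by
  rw [Ideal.span_le]
  rintro _ ⟨m, ⟨g, hgG, hg0, hlm⟩, rfl⟩
  have hc : g.coeff m ≠ 0 := mem_support_iff.mp hlm.1
  have hunit : (monomial m 1 : MvPolynomial σ k) = C (g.coeff m)⁻¹ * monomial m (g.coeff m) := by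
    rw [C_mul_monomial, inv_mul_cancel₀ hc]
  rw [hunit]
  exact Ideal.mul_mem_left _ _ (Ideal.subset_span ⟨g, hG hgG, hg0, m, hlm, rfl⟩)

theorem lmMonomials_mono {σ k : Type*} [CommSemiring k] {r : (σ →₀ ℕ) → (σ →₀ ℕ) → Prop}
    {G G' : Set (MvPolynomial σ k)} (hGG' : G ⊆ G') : lmMonomials r G ⊆ lmMonomials r G' := by
  rintro _ ⟨m, ⟨g, hgG, hg0, hlm⟩, rfl⟩
  exact ⟨m, ⟨g, hGG' hgG, hg0, hlm⟩, rfl⟩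

theorem monomial_mem_supported {σ R : Type*} [CommSemiring R] {s : Set σ}
    {p : MvPolynomial σ R} (hp : p ∈ supported R s) {m : σ →₀ ℕ} (hm : m ∈ p.support) (c : R) :
    monomial m c ∈ supported R s := by
  by_cases hc : c = 0
  · simp [hc]
  rw [mem_supported, vars_monomial hc]
  exact (Finset.coe_subset.mpr (support_subset_vars_of_mem_support hm)).trans
    (mem_supported.mp hp)

section Truncation

variable {k : Type*} [CommSemiring k]

theorem mem_Sn_of_sup_vars_lt {f : MvPolynomial ℕ k} {n : ℕ} (hn : f.vars.sup id < n) :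
    f ∈ Sn k n :=
  mem_supported.mpr fun _ hi => (Finset.le_sup (f := id) hi).trans_lt hn

theorem map_span_lmMonomials_le (r : (ℕ →₀ ℕ) → (ℕ →₀ ℕ) → Prop) (n : ℕ)
    (G : Set (MvPolynomial ℕ k)) :
    Ideal.map (Sn k n).subtype (Ideal.span {t : ↥(Sn k n) | ∃ m,
        (∃ g ∈ G, g ≠ 0 ∧ IsLM r g m) ∧ (t : MvPolynomial ℕ k) = monomial m 1}) ≤
      Ideal.span (lmMonomials r G) := by
  rw [Ideal.map_span]
  refine Ideal.span_mono ?_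
  rintro _ ⟨t, ⟨m, hm, ht⟩, rfl⟩
  exact ⟨m, hm, ht⟩

theorem mem_span_lmMonomials_of_isGroebnerBasisIn {r : (ℕ →₀ ℕ) → (ℕ →₀ ℕ) → Prop}
    {I : Ideal (MvPolynomial ℕ k)} {G : Set (MvPolynomial ℕ k)} {n : ℕ}
    (hGB : IsGroebnerBasisIn r n (G ∩ ↑(Sn k n)) (interIdeal I n))
    {f t : MvPolynomial ℕ k} (hfI : f ∈ I) (hfn : f ∈ Sn k n) (hf0 : f ≠ 0) (ht : IsLT r f t) :
    t ∈ Ideal.span (lmMonomials r G) := by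
  obtain ⟨m, hlm, rfl⟩ := ht
  have htn : monomial m (f.coeff m) ∈ Sn k n := monomial_mem_supported hfn hlm.1 _
  have hin : (⟨_, htn⟩ : ↥(Sn k n)) ∈ initialIdealIn r n (interIdeal I n) :=
    Ideal.subset_span ⟨⟨f, hfn⟩, hfI, fun h0 => hf0 (congrArg Subtype.val h0), m, hlm, rfl⟩
  rw [← hGB.2] at hin
  exact Ideal.span_mono (lmMonomials_mono Set.inter_subset_left)
    (map_span_lmMonomials_le r n _ (Ideal.mem_map_of_mem _ hin))

end Truncation

theorem isGroebnerBasis_of_infinitely_many_general {k : Type*} [Field k]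
    (r : (ℕ →₀ ℕ) → (ℕ →₀ ℕ) → Prop)
    (I : Ideal (MvPolynomial ℕ k))
    (G : Set (MvPolynomial ℕ k)) (hG : G ⊆ ↑I)
    (h : {n : ℕ | 1 ≤ n ∧
        IsGroebnerBasisIn r n (G ∩ ↑(Sn k n)) (interIdeal I n)}.Infinite) :
    IsGroebnerBasis r G I := by
  refine ⟨hG, (span_lmMonomials_le_initialIdeal hG).antisymm ?_⟩
  rw [initialIdeal, Ideal.span_le]
  rintro t ⟨f, hfI, hf0, ht⟩
  obtain ⟨n, ⟨-, hGB⟩, hn⟩ := h.exists_gt (f.vars.sup id)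
  exact mem_span_lmMonomials_of_isGroebnerBasisIn hGB hfI (mem_Sn_of_sup_vars_lt hn) hf0 ht

/-- Corollary 1.6: if `G ∩ S⟨n⟩` is a Gröbner base for `I ∩ S⟨n⟩` (inside `S⟨n⟩`) for
infinitely many integers `n`, then `G` is a Gröbner base for `I`. -/
theorem isGroebnerBasis_of_infinitely_many {k : Type*} [Field k]
    (r : (ℕ →₀ ℕ) → (ℕ →₀ ℕ) → Prop) (hr : IsMonomialOrder r)
    (I : Ideal (MvPolynomial ℕ k)) (hI : I ≠ ⊥)
    (G : Set (MvPolynomial ℕ k)) (hG : G ⊆ ↑I)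
    (h : {n : ℕ | 1 ≤ n ∧
        IsGroebnerBasisIn r n (G ∩ ↑(Sn k n)) (interIdeal I n)}.Infinite) :
    IsGroebnerBasis r G I :=
  isGroebnerBasis_of_infinitely_many_general r I G hG h

end
end

section
/- Let I be a nonzero ideal of S and let C be an arbitrary infinite subset of ℕ. For each n ∈ C, let G_n be a Gröbner base for the ideal I ∩ S⟨n⟩ of the polynomial ring S⟨n⟩. Then the union ⋃_{n∈C} G_n is a Gröbner base for I. -/
open MvPolynomial

noncomputable section

/-- Proposition 1.8: if `C ⊆ ℕ` is infinite and, for each `n ∈ C`, `Gₙ` is a Gröbner base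
for `I ∩ S⟨n⟩` inside `S⟨n⟩`, then `⋃_{n ∈ C} Gₙ` is a Gröbner base for `I`. -/
theorem union_isGroebnerBasis {k : Type*} [Field k]
    (r : (ℕ →₀ ℕ) → (ℕ →₀ ℕ) → Prop) (hr : IsMonomialOrder r)
    (I : Ideal (MvPolynomial ℕ k)) (hI : I ≠ ⊥)
    (C : Set ℕ) (hC : C.Infinite)
    (Gn : ℕ → Set (MvPolynomial ℕ k))
    (hGn : ∀ n ∈ C, IsGroebnerBasisIn r n (Gn n) (interIdeal I n)) :
    IsGroebnerBasis r (⋃ n ∈ C, Gn n) I := by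
  classical
  have hGI : (⋃ n ∈ C, Gn n) ⊆ ↑I := by
    intro g hg
    simp only [Set.mem_iUnion] at hg
    obtain ⟨n, hn, hgn⟩ := hg
    obtain ⟨hgS, hgI⟩ := (hGn n hn).1 g hgn
    simpa [interIdeal, Ideal.mem_comap] using hgI
  refine ⟨hGI, le_antisymm ?_ ?_⟩
  · -- span (lmMonomials) ≤ initialIdeal
    rw [Ideal.span_le]
    rintro t ⟨m, ⟨g, hgG, hg0, hlm⟩, rfl⟩
    have hgI' : g ∈ I := hGI hgG
    have hc : g.coeff m ≠ 0 := by
      have := hlm.1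
      simpa [MvPolynomial.mem_support_iff] using this
    have hgen : (monomial m (g.coeff m) : MvPolynomial ℕ k) ∈ initialIdeal r I :=
      Ideal.subset_span ⟨g, hgI', hg0, m, hlm, rfl⟩
    have : (MvPolynomial.C (g.coeff m)⁻¹ : MvPolynomial ℕ k) * monomial m (g.coeff m) =
        monomial m 1 := by
      rw [MvPolynomial.C_mul_monomial, inv_mul_cancel₀ hc]
    simpa [this] using Ideal.mul_mem_left _ (MvPolynomial.C (g.coeff m)⁻¹) hgen
  · -- initialIdeal ≤ span (lmMonomials)
    rw [initialIdeal, Ideal.span_le]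
    rintro t ⟨f, hfI, hf0, m, hlm, rfl⟩
    -- pick n ∈ C larger than all variables of f
    obtain ⟨n, hnC, hn⟩ := hC.exists_gt (f.vars.sup id)
    have hvars : ↑f.vars ⊆ {i | i < n} := by
      intro i hi
      exact lt_of_le_of_lt (Finset.le_sup (f := id) (by exact_mod_cast hi)) hn
    have hfS : f ∈ Sn k n := (MvPolynomial.mem_supported).2 hvars
    have hc : f.coeff m ≠ 0 := by
      have := hlm.1
      simpa [MvPolynomial.mem_support_iff] using this
    have htS : (monomial m (f.coeff m) : MvPolynomial ℕ k) ∈ Sn k n := by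
      refine (MvPolynomial.mem_supported).2 ?_
      rw [MvPolynomial.vars_monomial hc]
      intro i hi
      exact hvars (MvPolynomial.mem_vars i |>.2 ⟨m, hlm.1, by exact_mod_cast hi⟩)
    have hfJ : (⟨f, hfS⟩ : ↥(Sn k n)) ∈ interIdeal I n := by
      simpa [interIdeal, Ideal.mem_comap] using hfI
    have hf0' : (⟨f, hfS⟩ : ↥(Sn k n)) ≠ 0 := by
      intro h
      apply hf0
      simpa using congrArg Subtype.val h
    have htIn : (⟨monomial m (f.coeff m), htS⟩ : ↥(Sn k n)) ∈
        initialIdealIn r n (interIdeal I n) :=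
      Ideal.subset_span ⟨⟨f, hfS⟩, hfJ, hf0', m, hlm, rfl⟩
    rw [← (hGn n hnC).2] at htIn
    have hmap : (monomial m (f.coeff m) : MvPolynomial ℕ k) ∈
        Ideal.map (Sn k n).subtype
          (Ideal.span {t : ↥(Sn k n) | ∃ m, (∃ g ∈ Gn n, g ≠ 0 ∧ IsLM r g m) ∧
            (t : MvPolynomial ℕ k) = monomial m 1}) :=
      Ideal.mem_map_of_mem _ htIn
    rw [Ideal.map_span] at hmap
    refine Ideal.span_mono ?_ hmap
    rintro s ⟨t', ⟨m', ⟨g, hgG, hg0, hlm'⟩, ht'⟩, rfl⟩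
    exact ⟨m', ⟨g, Set.mem_iUnion.2 ⟨n, Set.mem_iUnion.2 ⟨hnC, hgG⟩⟩, hg0, hlm'⟩, ht'⟩

end
end

section
/- For every nonzero ideal I of S there exists a unique reduced Gröbner base for I: there is a Gröbner base G for I such that every g ∈ G is monic and for any two distinct g, h ∈ G the leading monomial lm(g) does not divide any term of h, and any two Gröbner bases for I with these properties are equal. -/
open MvPolynomial

noncomputable section

/-! A reduced Gröbner base of `I` has pairwise incomparable leading monomials whose upper
closure is the exponent set of `in(I)`, so its leading monomials are exactly the minimal
exponents of `in(I)`. Call a monomial standard if it is not in `in(I)`. Division writes every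
polynomial as an element of `I` plus a combination of standard monomials, and an element of `I`
all of whose monomials are standard is `0`, since its leading monomial lies in `in(I)`. Hence
for each minimal exponent `m` there is exactly one monic `g ∈ I` with leading monomial `m`
whose other monomials are all standard (namely `x^m` minus its standard part), and these
polynomials form the unique reduced Gröbner base. -/

namespace IsMonomialOrder

variable {σ : Type*} {r : (σ →₀ ℕ) → (σ →₀ ℕ) → Prop}

theorem rel_zero_of_ne_zero (hr : IsMonomialOrder r) {d : σ →₀ ℕ} (hd : d ≠ 0) : r 0 d := by
  have := hr.1
  rcases trichotomous_of r 0 d with h | h | h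
  · exact h
  · exact absurd h.symm hd
  -- if `d` were below `0`, then `0 > d > 2d > 3d > ⋯` would be an infinite descending chain
  obtain ⟨_, ⟨n, rfl⟩, hmin⟩ := hr.1.wf.has_min (Set.range (· • d)) ⟨d, 1, one_smul ℕ d⟩
  refine absurd ?_ (hmin ((n + 1) • d) ⟨n + 1, rfl⟩)
  simpa [succ_nsmul] using hr.2 d 0 (n • d) h

theorem rel_of_le_of_ne (hr : IsMonomialOrder r) {a b : σ →₀ ℕ} (hab : a ≤ b) (hne : a ≠ b) :
    r a b := by
  obtain ⟨d, rfl⟩ := le_iff_exists_add.mp hab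
  simpa using hr.2 0 d a (hr.rel_zero_of_ne_zero fun hd => hne (by simp [hd]))

theorem exists_isLM (hr : IsMonomialOrder r) {k : Type*} [CommSemiring k]
    {f : MvPolynomial σ k} (hf : f ≠ 0) : ∃ m, IsLM r f m := by
  have := hr.1
  suffices ∀ s : Finset (σ →₀ ℕ), s.Nonempty → ∃ m ∈ s, ∀ m' ∈ s, m' ≠ m → r m' m from
    this f.support (support_nonempty.mpr hf)
  intro s hs
  induction hs using Finset.Nonempty.cons_induction with
  | singleton a => exact ⟨a, by simp, by simp⟩
  | cons a s _ _ ih =>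
    obtain ⟨m, hm, hmax⟩ := ih
    rcases trichotomous_of r a m with h | rfl | h
    · refine ⟨m, by simp [hm], fun m' hm' hne => ?_⟩
      rcases Finset.mem_cons.mp hm' with rfl | hm'
      exacts [h, hmax m' hm' hne]
    · exact ⟨a, by simp, fun m' hm' hne =>
        hmax m' ((Finset.mem_cons.mp hm').resolve_left hne) hne⟩
    · refine ⟨a, by simp, fun m' hm' hne => ?_⟩
      have hm' := (Finset.mem_cons.mp hm').resolve_left hne
      by_cases hm'm : m' = m
      exacts [hm'm ▸ h, _root_.trans (hmax m' hm' hm'm) h]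

theorem isLM_unique (hr : IsMonomialOrder r) {k : Type*} [CommSemiring k]
    {f : MvPolynomial σ k} {m m' : σ →₀ ℕ} (h : IsLM r f m) (h' : IsLM r f m') : m = m' := by
  have := hr.1
  by_contra hne
  exact asymm (h'.2 m h.1 hne) (h.2 m' h'.1 (Ne.symm hne))

theorem isLM_monomial_mul (hr : IsMonomialOrder r) {k : Type*} [CommSemiring k]
    {h : MvPolynomial σ k} {m : σ →₀ ℕ} (hm : IsLM r h m) (d : σ →₀ ℕ) {c : k}
    (hc : c * h.coeff m ≠ 0) : IsLM r (monomial d c * h) (d + m) := by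
  refine ⟨by rwa [mem_support_iff, coeff_monomial_mul], fun m' hm' hne => ?_⟩
  rw [mem_support_iff, coeff_monomial_mul'] at hm'
  split_ifs at hm' with hd
  · obtain ⟨e, rfl⟩ := le_iff_exists_add.mp hd
    rw [add_tsub_cancel_left] at hm'
    exact hr.2 e m d (hm.2 e (mem_support_iff.mpr (right_ne_zero_of_mul hm'))
      fun he => hne (by rw [he]))
  · exact absurd rfl hm'

end IsMonomialOrder

theorem isLM_monomial {σ k : Type*} [CommSemiring k] {r : (σ →₀ ℕ) → (σ →₀ ℕ) → Prop}
    {m : σ →₀ ℕ} {c : k} (hc : c ≠ 0) : IsLM r (monomial m c) m := by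
  classical
  refine ⟨by simp [hc], fun m' hm' hne => ?_⟩
  simp [support_monomial, hc, hne] at hm'

theorem IsLM.rel_of_mem_support_sub {σ k : Type*} [CommRing k]
    {r : (σ →₀ ℕ) → (σ →₀ ℕ) → Prop} {f g : MvPolynomial σ k} {m m' : σ →₀ ℕ}
    (hf : IsLM r f m) (hg : IsLM r g m) (hfg : f.coeff m = g.coeff m)
    (hm' : m' ∈ (f - g).support) : r m' m := by
  classical
  have hne : m' ≠ m := by
    rintro rfl
    simp [mem_support_iff, hfg] at hm'
  rcases Finset.mem_union.mp (support_sub σ f g hm') with h | h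
  exacts [hf.2 m' h hne, hg.2 m' h hne]

def leadingMonomials {σ k : Type*} [CommSemiring k] (r : (σ →₀ ℕ) → (σ →₀ ℕ) → Prop)
    (G : Set (MvPolynomial σ k)) : Set (σ →₀ ℕ) :=
  {m | ∃ g ∈ G, g ≠ 0 ∧ IsLM r g m}

section MonomialIdeal

variable {σ k : Type*} {r : (σ →₀ ℕ) → (σ →₀ ℕ) → Prop}

theorem lmMonomials_eq_image [CommSemiring k] (G : Set (MvPolynomial σ k)) :
    lmMonomials r G = (monomial · (1 : k)) '' leadingMonomials r G := by
  ext t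
  simp only [lmMonomials, leadingMonomials, Set.mem_image, Set.mem_ofPred_eq, eq_comm]

theorem monomial_one_mem_span_monomial_image [CommSemiring k] [Nontrivial k]
    {s : Set (σ →₀ ℕ)} {m : σ →₀ ℕ} :
    monomial m (1 : k) ∈ Ideal.span ((monomial · (1 : k)) '' s) ↔ m ∈ upperClosure s := by
  classical
  simp [mem_ideal_span_monomial_image, support_monomial, mem_upperClosure]

theorem span_monomial_image_eq_iff [CommSemiring k] [Nontrivial k] {s t : Set (σ →₀ ℕ)} :
    Ideal.span ((monomial · (1 : k)) '' s) = Ideal.span ((monomial · (1 : k)) '' t) ↔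
      upperClosure s = upperClosure t := by
  refine ⟨fun h => SetLike.ext fun m => ?_, fun h => SetLike.ext fun x => ?_⟩
  · rw [← monomial_one_mem_span_monomial_image (k := k), h, monomial_one_mem_span_monomial_image]
  · simp only [mem_ideal_span_monomial_image, ← mem_upperClosure, h]

theorem initialIdeal_eq_span [Field k] (I : Ideal (MvPolynomial σ k)) :
    initialIdeal r I =
      Ideal.span ((monomial · (1 : k)) '' leadingMonomials r (I : Set (MvPolynomial σ k))) := by
  refine le_antisymm (Ideal.span_le.mpr ?_) (Ideal.span_le.mpr ?_)
  · rintro _ ⟨f, hfI, hf0, m, hm, rfl⟩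
    rw [← mul_one (f.coeff m), ← C_mul_monomial]
    exact Ideal.mul_mem_left _ _ (Ideal.subset_span ⟨m, ⟨f, hfI, hf0, hm⟩, rfl⟩)
  · rintro _ ⟨m, ⟨f, hfI, hf0, hm⟩, rfl⟩
    dsimp only
    rw [← inv_mul_cancel₀ (mem_support_iff.mp hm.1), ← C_mul_monomial]
    exact Ideal.mul_mem_left _ _ (Ideal.subset_span ⟨f, hfI, hf0, m, hm, rfl⟩)

theorem isGroebnerBasis_iff [Field k] {G : Set (MvPolynomial σ k)}
    {I : Ideal (MvPolynomial σ k)} :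
    IsGroebnerBasis r G I ↔
      G ⊆ I ∧ upperClosure (leadingMonomials r G) =
        upperClosure (leadingMonomials r (I : Set (MvPolynomial σ k))) := by
  rw [IsGroebnerBasis, lmMonomials_eq_image, initialIdeal_eq_span, span_monomial_image_eq_iff]

end MonomialIdeal

theorem MvPolynomial.mem_of_forall_monomial_one_mem {σ k : Type*} [CommSemiring k]
    {P : Submodule k (MvPolynomial σ k)} {f : MvPolynomial σ k}
    (h : ∀ m ∈ f.support, monomial m (1 : k) ∈ P) : f ∈ P := by
  have hf : f ∈ restrictSupport k (f.support : Set (σ →₀ ℕ)) :=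
    (mem_restrictSupport_iff k).mpr le_rfl
  rw [restrictSupport_eq_span] at hf
  exact Submodule.span_le.mpr (by rintro _ ⟨m, hm, rfl⟩; exact h m hm) hf

namespace IsMonomialOrder

variable {σ k : Type*} [Field k] {r : (σ →₀ ℕ) → (σ →₀ ℕ) → Prop} (hr : IsMonomialOrder r)
  {I : Ideal (MvPolynomial σ k)}
include hr

theorem exists_sub_mem_forall_support_notMem_upperClosure (f : MvPolynomial σ k) :
    ∃ b, f - b ∈ I ∧
      ∀ m ∈ b.support, m ∉ upperClosure (leadingMonomials r (I : Set (MvPolynomial σ k))) := by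
  classical
  set N := upperClosure (leadingMonomials r (I : Set (MvPolynomial σ k)))
  set P : Submodule k (MvPolynomial σ k) :=
    I.restrictScalars k ⊔ restrictSupport k (N : Set (σ →₀ ℕ))ᶜ
  suffices hP : ∀ m, monomial m (1 : k) ∈ P by
    obtain ⟨i, hi, b, hb, rfl⟩ :=
      Submodule.mem_sup.mp (show f ∈ P from mem_of_forall_monomial_one_mem fun m _ => hP m)
    exact ⟨b, by simpa using hi, fun m hm => (mem_restrictSupport_iff k).mp hb hm⟩
  intro m
  induction m using hr.1.wf.induction with | _ m ih
  by_cases hm : m ∈ N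
  · -- cancel the leading term of `x^m` against a multiple of some `h ∈ I` with `lm h ∣ x^m`
    obtain ⟨m₀, ⟨h, hhI, -, hlm⟩, hle⟩ := mem_upperClosure.mp hm
    obtain ⟨d, rfl⟩ := exists_add_of_le hle
    have hlc : h.coeff m₀ ≠ 0 := mem_support_iff.mp hlm.1
    set u := monomial d (h.coeff m₀)⁻¹ * h
    have hu : IsLM r u (m₀ + d) := add_comm d m₀ ▸ hr.isLM_monomial_mul hlm d (by simp [hlc])
    have hu1 : u.coeff (m₀ + d) = 1 := by
      rw [add_comm, coeff_monomial_mul, inv_mul_cancel₀ hlc]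
    rw [← sub_add_cancel (monomial (m₀ + d) (1 : k)) u]
    refine P.add_mem (mem_of_forall_monomial_one_mem fun m' hm' => ih m' ?_)
      (Submodule.mem_sup_left (I.mul_mem_left _ hhI))
    exact (isLM_monomial one_ne_zero).rel_of_mem_support_sub hu
      (by rw [hu1, coeff_monomial, if_pos rfl]) hm'
  · exact Submodule.mem_sup_right
      ((mem_restrictSupport_iff k).mpr (by simpa [support_monomial] using hm))

theorem eq_zero_of_forall_support_notMem_upperClosure {f : MvPolynomial σ k} (hfI : f ∈ I)
    (hf : ∀ m ∈ f.support, m ∉ upperClosure (leadingMonomials r (I : Set (MvPolynomial σ k)))) :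
    f = 0 := by
  by_contra hf0
  obtain ⟨m, hm⟩ := hr.exists_isLM hf0
  exact hf m hm.1 (subset_upperClosure ⟨f, hfI, hf0, hm⟩)

theorem exists_monic_isLM_forall_support_notMem_upperClosure {m : σ →₀ ℕ}
    (hm : m ∈ upperClosure (leadingMonomials r (I : Set (MvPolynomial σ k)))) :
    ∃ g ∈ I, IsLM r g m ∧ g.coeff m = 1 ∧ ∀ m' ∈ g.support, m' ≠ m →
      m' ∉ upperClosure (leadingMonomials r (I : Set (MvPolynomial σ k))) := by
  classical
  obtain ⟨b, hbI, hb⟩ :=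
    hr.exists_sub_mem_forall_support_notMem_upperClosure (I := I) (monomial m 1)
  have hmb : b.coeff m = 0 := notMem_support_iff.mp fun h => hb m h hm
  have hsupp : ∀ m' ∈ (monomial m (1 : k) - b).support, m' ≠ m → m' ∈ b.support :=
    fun m' hm' hne => (Finset.mem_union.mp (support_sub σ _ _ hm')).resolve_left
      (by simp [support_monomial, hne])
  have hg1 : (monomial m (1 : k) - b).coeff m = 1 := by simp [hmb]
  refine ⟨_, hbI, ?_, hg1, fun m' hm' hne => hb m' (hsupp m' hm' hne)⟩
  have hg0 : monomial m (1 : k) - b ≠ 0 := fun h => by simp [h] at hg1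
  obtain ⟨m₂, hm₂⟩ := hr.exists_isLM hg0
  obtain rfl : m₂ = m := by
    by_contra hne
    exact hb m₂ (hsupp m₂ hm₂.1 hne) (subset_upperClosure ⟨_, hbI, hg0, hm₂⟩)
  exact hm₂

end IsMonomialOrder

theorem upperClosure_setOf_minimal {α : Type*} [Preorder α] [WellFoundedLT α] (s : Set α) :
    upperClosure {x | Minimal (· ∈ s) x} = upperClosure s := by
  ext x
  simp only [SetLike.mem_coe, mem_upperClosure]
  refine ⟨fun ⟨a, ha, hax⟩ => ⟨a, ha.prop, hax⟩, fun ⟨a, ha, hax⟩ => ?_⟩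
  obtain ⟨b, hba, hb⟩ := exists_minimal_le_of_wellFoundedLT _ a ha
  exact ⟨b, hb, hba.trans hax⟩

namespace IsReducedGB

variable {σ k : Type*} [Field k] {r : (σ →₀ ℕ) → (σ →₀ ℕ) → Prop} (hr : IsMonomialOrder r)
  {G G' : Set (MvPolynomial σ k)} {I : Ideal (MvPolynomial σ k)}

theorem ne_zero (hG : IsReducedGB r G I) {g : MvPolynomial σ k} (hg : g ∈ G) : g ≠ 0 := by
  obtain ⟨m, -, hg1⟩ := hG.2.1 g hg
  rintro rfl
  simp at hg1

include hr

theorem isAntichain_leadingMonomials (hG : IsReducedGB r G I) :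
    IsAntichain (· ≤ ·) (leadingMonomials r G) := by
  rintro a ⟨g, hg, -, ha⟩ b ⟨h, hh, -, hb⟩ hne hle
  have hgh : g ≠ h := by
    rintro rfl
    exact hne (hr.isLM_unique ha hb)
  exact hG.2.2 g hg h hh hgh a ha b hb.1 hle

theorem leadingMonomials_eq (hG : IsReducedGB r G I) :
    leadingMonomials r G =
      {m | Minimal (· ∈ upperClosure (leadingMonomials r (I : Set (MvPolynomial σ k)))) m} := by
  ext m
  rw [Set.mem_ofPred_eq, ← (isGroebnerBasis_iff.mp hG.1).2,
    (hG.isAntichain_leadingMonomials hr).minimal_mem_upperClosure_iff_mem]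

theorem notMem_upperClosure_of_mem_support (hG : IsReducedGB r G I) {g : MvPolynomial σ k}
    (hg : g ∈ G) {m m' : σ →₀ ℕ} (hm : IsLM r g m) (hm' : m' ∈ g.support) (hne : m' ≠ m) :
    m' ∉ upperClosure (leadingMonomials r (I : Set (MvPolynomial σ k))) := by
  have := hr.1
  rw [← (isGroebnerBasis_iff.mp hG.1).2, mem_upperClosure]
  rintro ⟨m₁, ⟨g₁, hg₁, -, hm₁⟩, hle⟩
  obtain rfl : g₁ = g := by_contra fun hne₁ => hG.2.2 g₁ hg₁ g hg hne₁ m₁ hm₁ m' hm' hle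
  obtain rfl := hr.isLM_unique hm₁ hm
  exact asymm (hm.2 m' hm' hne) (hr.rel_of_le_of_ne hle hne.symm)

theorem subset (hG : IsReducedGB r G I) (hG' : IsReducedGB r G' I) : G ⊆ G' := by
  classical
  have := hr.1
  intro g hg
  obtain ⟨m, hm, hg1⟩ := hG.2.1 g hg
  obtain ⟨h, hh, -, hmh⟩ : m ∈ leadingMonomials r G' := by
    rw [hG'.leadingMonomials_eq hr, ← hG.leadingMonomials_eq hr]
    exact ⟨g, hg, hG.ne_zero hg, hm⟩
  obtain ⟨m', hm', hh1⟩ := hG'.2.1 h hh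
  obtain rfl := hr.isLM_unique hmh hm'
  suffices g - h = 0 from sub_eq_zero.mp this ▸ hh
  refine hr.eq_zero_of_forall_support_notMem_upperClosure
    (I.sub_mem (hG.1.1 hg) (hG'.1.1 hh)) fun n hn => ?_
  -- the leading terms cancel, and the other terms of `g` and `h` are standard monomials
  have hnm : n ≠ m := ne_of_irrefl (hm.rel_of_mem_support_sub hmh (by rw [hg1, hh1]) hn)
  rcases Finset.mem_union.mp (support_sub σ g h hn) with hn' | hn'
  exacts [hG.notMem_upperClosure_of_mem_support hr hg hm hn' hnm,
    hG'.notMem_upperClosure_of_mem_support hr hh hmh hn' hnm]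

theorem unique (hG : IsReducedGB r G I) (hG' : IsReducedGB r G' I) : G = G' :=
  (hG.subset hr hG').antisymm (hG'.subset hr hG)

end IsReducedGB

theorem IsMonomialOrder.exists_isReducedGB {σ k : Type*} [Field k]
    {r : (σ →₀ ℕ) → (σ →₀ ℕ) → Prop} (hr : IsMonomialOrder r) (I : Ideal (MvPolynomial σ k)) :
    ∃ G, IsReducedGB r G I := by
  set N := upperClosure (leadingMonomials r (I : Set (MvPolynomial σ k)))
  set M := {m | Minimal (· ∈ (N : Set (σ →₀ ℕ))) m} with hM
  choose g hgI hlm hg1 hstd using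
    fun m : M => hr.exists_monic_isLM_forall_support_notMem_upperClosure m.2.prop
  have hg0 : ∀ a, g a ≠ 0 := fun a h => by simpa [h] using hg1 a
  have hlms : leadingMonomials r (Set.range g) = M := by
    ext n
    refine ⟨?_, fun hn => ⟨g ⟨n, hn⟩, Set.mem_range_self _, hg0 _, hlm _⟩⟩
    rintro ⟨_, ⟨a, rfl⟩, -, hn⟩
    exact hr.isLM_unique (hlm a) hn ▸ a.2
  refine ⟨Set.range g, isGroebnerBasis_iff.mpr ⟨Set.range_subset_iff.mpr hgI, ?_⟩, ?_, ?_⟩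
  · rw [hlms, hM, upperClosure_setOf_minimal, UpperSet.upperClosure]
  · rintro _ ⟨a, rfl⟩
    exact ⟨a, hlm a, hg1 a⟩
  · rintro _ ⟨a, rfl⟩ _ ⟨b, rfl⟩ hne n hn n' hn' hle
    obtain rfl := hr.isLM_unique hn (hlm a)
    by_cases hb : n' = b
    · subst hb
      exact hne (congrArg g (Subtype.ext (b.2.eq_of_ge a.2.prop hle).symm))
    · exact hstd b n' hn' hb (N.upper hle a.2.prop)

theorem existsUnique_reducedGB_general {k : Type*} [Field k]
    (r : (ℕ →₀ ℕ) → (ℕ →₀ ℕ) → Prop) (hr : IsMonomialOrder r)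
    (I : Ideal (MvPolynomial ℕ k)) :
    ∃! G : Set (MvPolynomial ℕ k), IsReducedGB r G I := by
  obtain ⟨G, hG⟩ := hr.exists_isReducedGB I
  exact ⟨G, hG, fun G' hG' => hG'.unique hr hG⟩

/-- Proposition 1.11: every nonzero ideal of `S = k[x₁,x₂,…]` has a unique reduced
Gröbner base. -/
theorem existsUnique_reducedGB {k : Type*} [Field k]
    (r : (ℕ →₀ ℕ) → (ℕ →₀ ℕ) → Prop) (hr : IsMonomialOrder r)
    (I : Ideal (MvPolynomial ℕ k)) (hI : I ≠ ⊥) :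
    ∃! G : Set (MvPolynomial ℕ k), IsReducedGB r G I :=
  existsUnique_reducedGB_general r hr I

end
end

section
/- (Buchberger's criterion.) Let G be a subset of S generating an ideal I of S. Then G is a Gröbner base for I if and only if for every pair of nonzero elements g, h ∈ G, the S-polynomial S(g,h) = (lcm(lm(g),lm(h))/lt(g))·g − (lcm(lm(g),lm(h))/lt(h))·h has 0 as a remainder with respect to G. -/
open MvPolynomial

noncomputable section

/-!
Transport `r` to a `MonomialOrder`. Both sides of the equivalence are then statements about
standard representations `f = ∑ cᵢ xᵃⁱ gᵢ` (`gᵢ ∈ G`, every `aᵢ + lm gᵢ ≼ lm f`): having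
remainder `0` is having such a representation, and `G` is a Gröbner base iff `lm f` is
divisible by some `lm g` for every nonzero `f ∈ I`.

If `G` is a Gröbner base, dividing `f ∈ I` by `G` leaves a remainder in `I` none of whose
monomials is divisible by any `lm g`, so it is `0`; S-polynomials lie in `I`. Conversely, write
`f ∈ I` as `∑ cᵢ xᵃⁱ gᵢ` with all `aᵢ + lm gᵢ ≼ δ`. If `lm f ≺ δ`, the leading coefficients of
the summands of degree exactly `δ` cancel, so their sum is a combination of their
S-polynomials, which are monomial multiples `x^(δ - lcm) S(gᵢ, gⱼ)`; substituting standard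
representations of the `S(gᵢ, gⱼ)`, whose degrees are `≺ lcm`, gives a representation with a
smaller bound. By well-foundedness `f` has a standard representation, whose top summand shows
`lm gᵢ ∣ lm f`.
-/

open MvPolynomial Set

theorem MvPolynomial.smul_monomial_one_mul {σ k : Type*} [CommSemiring k] (c : k)
    (a : σ →₀ ℕ) (g : MvPolynomial σ k) : c • (monomial a 1 * g) = monomial a c * g := by
  rw [← smul_mul_assoc, smul_monomial, smul_eq_mul, mul_one]

universe u

namespace IsMonomialOrder

variable {σ : Type u} {r : (σ →₀ ℕ) → (σ →₀ ℕ) → Prop}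

theorem not_lt_zero (hr : IsMonomialOrder r) (a : σ →₀ ℕ) : ¬ r a 0 := by
  have := hr.1
  induction a using hr.1.wf.induction with
  | _ a ih =>
    intro ha
    have h2a : r (a + a) a := by simpa using hr.2 a 0 a ha
    exact ih _ h2a (_root_.trans h2a ha)

theorem eq_or_lt_of_le (hr : IsMonomialOrder r) {a b : σ →₀ ℕ} (hab : a ≤ b) :
    a = b ∨ r a b := by
  have := hr.1
  obtain ⟨c, rfl⟩ := exists_add_of_le hab
  rcases eq_or_ne c 0 with rfl | hc
  · exact Or.inl (add_zero a).symm
  · have h0c : r 0 c :=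
      (trichotomous_of r 0 c).resolve_right (not_or_intro hc.symm (hr.not_lt_zero c))
    exact Or.inr (by simpa using hr.2 0 c a h0c)

theorem exists_monomialOrder (hr : IsMonomialOrder r) :
    ∃ m : MonomialOrder.{u, u} σ, ∀ a b, m.toSyn a < m.toSyn b ↔ r a b := by
  classical
  have := hr.1
  have add_le_add_left (a b : σ →₀ ℕ) (hab : a = b ∨ r a b) (c) :
      c + a = c + b ∨ r (c + a) (c + b) :=
    hab.imp (congrArg _) (hr.2 a b c)
  exact ⟨{
    syn := σ →₀ ℕ
    linearOrderSyn := linearOrderOfSTO r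
    -- explicit, as instance search would find the pointwise order of `σ →₀ ℕ`
    isOrderedAddMonoid_syn := @IsOrderedAddMonoid.mk _ _ (linearOrderOfSTO r).toPreorder
      (fun a b hab c => by rw [add_comm a, add_comm b]; exact add_le_add_left a b hab c)
      (fun a b hab c => add_le_add_left a b hab c)
    toSyn := AddEquiv.refl _
    toSyn_monotone := fun _ _ => hr.eq_or_lt_of_le
    wellFoundedLT_syn := ⟨hr.1.wf⟩ }, fun _ _ => Iff.rfl⟩

end IsMonomialOrder

namespace MonomialOrder

variable {σ : Type*} (m : MonomialOrder σ)

section CommSemiring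

variable {k : Type*} [CommSemiring k]

/-- `f ∈ m.boundedSpan G (Iic (m.toSyn (m.degree f)))` says that `f` has a standard
representation `∑ cᵢ xᵃⁱ gᵢ` with respect to `G`. -/
def boundedSpan (G : Set (MvPolynomial σ k)) (s : Set m.syn) : Submodule k (MvPolynomial σ k) :=
  Submodule.span k {p | ∃ g ∈ G, ∃ a, m.toSyn (a + m.degree g) ∈ s ∧ p = monomial a 1 * g}

variable {m} {G : Set (MvPolynomial σ k)} {s t : Set m.syn} {f g : MvPolynomial σ k}

theorem monomial_mul_mem_boundedSpan (hg : g ∈ G) {a : σ →₀ ℕ}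
    (ha : m.toSyn (a + m.degree g) ∈ s) (c : k) : monomial a c * g ∈ m.boundedSpan G s :=
  smul_monomial_one_mul c a g ▸
    Submodule.smul_mem _ c (Submodule.subset_span ⟨g, hg, a, ha, rfl⟩)

theorem boundedSpan_mono (hst : s ⊆ t) : m.boundedSpan G s ≤ m.boundedSpan G t :=
  Submodule.span_mono fun _ ⟨g, hg, a, ha, hp⟩ => ⟨g, hg, a, hst ha, hp⟩

theorem boundedSpan_union :
    m.boundedSpan G (s ∪ t) = m.boundedSpan G s ⊔ m.boundedSpan G t := by
  rw [boundedSpan, boundedSpan, boundedSpan, ← Submodule.span_union]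
  congr 1
  ext p
  simp only [mem_union, mem_ofPred_eq]
  constructor
  · rintro ⟨g, hg, a, ha | ha, rfl⟩
    exacts [Or.inl ⟨g, hg, a, ha, rfl⟩, Or.inr ⟨g, hg, a, ha, rfl⟩]
  · rintro (⟨g, hg, a, ha, rfl⟩ | ⟨g, hg, a, ha, rfl⟩)
    exacts [⟨g, hg, a, Or.inl ha, rfl⟩, ⟨g, hg, a, Or.inr ha, rfl⟩]

theorem toSyn_degree_monomial_mul_le (a : σ →₀ ℕ) (c : k) (g : MvPolynomial σ k) :
    m.toSyn (m.degree (monomial a c * g)) ≤ m.toSyn (a + m.degree g) :=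
  calc m.toSyn (m.degree (monomial a c * g))
    _ ≤ m.toSyn (m.degree (monomial a c) + m.degree g) := m.degree_mul_le
    _ = m.toSyn (m.degree (monomial a c)) + m.toSyn (m.degree g) := map_add _ _ _
    _ ≤ m.toSyn a + m.toSyn (m.degree g) := add_le_add (m.degree_monomial_le c) le_rfl
    _ = m.toSyn (a + m.degree g) := (map_add _ _ _).symm

theorem boundedSpan_le_restrictSupport (hs : IsLowerSet s) :
    m.boundedSpan G s ≤ restrictSupport k (m.toSyn ⁻¹' s) := by
  refine Submodule.span_le.mpr ?_
  rintro _ ⟨g, -, a, ha, rfl⟩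
  refine (mem_restrictSupport_iff k).mpr fun c hc => hs ?_ ha
  exact (m.le_degree hc).trans (toSyn_degree_monomial_mul_le a 1 g)

theorem toSyn_degree_lt_of_mem_boundedSpan_Iio {d : m.syn} (hf : f ∈ m.boundedSpan G (Iio d))
    (hf0 : f ≠ 0) : m.toSyn (m.degree f) < d :=
  (mem_restrictSupport_iff k).mp (boundedSpan_le_restrictSupport (isLowerSet_Iio d) hf)
    (m.degree_mem_support hf0)

theorem toSyn_degree_le_of_mem_boundedSpan_Iic {d : m.syn} (hf : f ∈ m.boundedSpan G (Iic d)) :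
    m.toSyn (m.degree f) ≤ d := by
  rcases eq_or_ne f 0 with rfl | hf0
  · simp
  · exact (mem_restrictSupport_iff k).mp (boundedSpan_le_restrictSupport (isLowerSet_Iic d) hf)
      (m.degree_mem_support hf0)

theorem mul_mem_boundedSpan_Iic [NoZeroDivisors k] (hg : g ∈ G) {q : MvPolynomial σ k} {d : m.syn}
    (hd : m.toSyn (m.degree (q * g)) ≤ d) : q * g ∈ m.boundedSpan G (Iic d) := by
  rcases eq_or_ne q 0 with rfl | hq
  · simp
  rcases eq_or_ne g 0 with rfl | hg0
  · simp
  rw [m.degree_mul hq hg0, map_add] at hd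
  rw [q.as_sum, Finset.sum_mul]
  refine Submodule.sum_mem _ fun a ha => monomial_mul_mem_boundedSpan hg ?_ _
  rw [mem_Iic, map_add]
  exact (add_le_add (m.le_degree ha) le_rfl).trans hd

theorem exists_mem_boundedSpan_of_mem_span [NoZeroDivisors k] (hf : f ∈ Ideal.span G) :
    ∃ d, f ∈ m.boundedSpan G (Iic d) := by
  obtain ⟨n, q, g, rfl⟩ := Submodule.mem_span_set'.mp hf
  let d i := m.toSyn (m.degree (q i * (g i : MvPolynomial σ k)))
  exact ⟨Finset.univ.sup d, Submodule.sum_mem _ fun i _ =>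
    mul_mem_boundedSpan_Iic (g i).2 (Finset.le_sup (f := d) (Finset.mem_univ i))⟩

theorem exists_lt_of_mem_boundedSpan_Iio {d : m.syn} (hf : f ∈ m.boundedSpan G (Iio d))
    (hf0 : f ≠ 0) : ∃ d' < d, f ∈ m.boundedSpan G (Iic d') := by
  have hle : m.boundedSpan G (Iio d) ≤ ⨆ d' : Iio d, m.boundedSpan G (Iic d') :=
    Submodule.span_le.mpr fun _ ⟨g, hg, a, ha, hp⟩ =>
      Submodule.mem_iSup_of_mem ⟨_, ha⟩ (Submodule.subset_span ⟨g, hg, a, le_rfl, hp⟩)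
  rcases isEmpty_or_nonempty (Iio d) with hd | hd
  · rw [iSup_of_empty, le_bot_iff] at hle
    exact absurd (by simpa [hle] using hf) hf0
  · have hdir : Directed (· ≤ ·) fun d' : Iio d => m.boundedSpan G (Iic d') :=
      Monotone.directed_le fun _ _ h => boundedSpan_mono (Iic_subset_Iic.mpr h)
    obtain ⟨⟨d', hd'⟩, hfd'⟩ := (Submodule.mem_iSup_of_directed _ hdir).mp (hle hf)
    exact ⟨d', hd', hfd'⟩

theorem monomial_mul_mem_boundedSpan_Iio {d : m.syn} (hf : f ∈ m.boundedSpan G (Iio d))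
    (a : σ →₀ ℕ) (c : k) : monomial a c * f ∈ m.boundedSpan G (Iio (m.toSyn a + d)) := by
  let L := LinearMap.mulLeft k (monomial a c : MvPolynomial σ k)
  suffices m.boundedSpan G (Iio d) ≤ (m.boundedSpan G (Iio (m.toSyn a + d))).comap L from this hf
  refine Submodule.span_le.mpr ?_
  rintro _ ⟨g, hg, b, hb, rfl⟩
  have : L (monomial b 1 * g) = monomial (a + b) c * g := by
    simp [L, ← mul_assoc, monomial_mul]
  rw [SetLike.mem_coe, Submodule.mem_comap, this]
  refine monomial_mul_mem_boundedSpan hg ?_ c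
  rw [mem_Iio, add_assoc, map_add]
  exact add_lt_add_right hb _

theorem exists_degree_le_of_mem_boundedSpan (hf0 : f ≠ 0)
    (hf : f ∈ m.boundedSpan G (Iic (m.toSyn (m.degree f)))) :
    ∃ g ∈ G, g ≠ 0 ∧ m.degree g ≤ m.degree f := by
  by_contra! hG
  -- `coeff (lm f)` vanishes on every generator `xᵃ g` with `lm g ∤ lm f`
  refine m.coeff_degree_ne_zero_iff.mpr hf0 ?_
  suffices m.boundedSpan G (Iic _) ≤ LinearMap.ker (lcoeff k (m.degree f)) from this hf
  refine Submodule.span_le.mpr ?_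
  rintro _ ⟨g, hg, a, ha, rfl⟩
  simp only [SetLike.mem_coe, LinearMap.mem_ker, lcoeff_apply, coeff_monomial_mul', one_mul]
  split_ifs with haf
  · by_contra hc
    have hb := m.le_degree (mem_support_iff.mpr hc)
    have ha' : m.toSyn a + m.toSyn (m.degree g) ≤ m.toSyn a + m.toSyn (m.degree f - a) := by
      rw [← map_add, ← map_add, add_tsub_cancel_of_le haf]
      exact ha
    have hdeg : m.degree g = m.degree f - a :=
      m.toSyn.injective (le_antisymm (le_of_add_le_add_left ha') hb)
    exact hG g hg (by rintro rfl; simp at hc) (hdeg ▸ tsub_le_self)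
  · rfl

end CommSemiring

section Field

variable {m} {k : Type*} [Field k] {G : Set (MvPolynomial σ k)} {f g h : MvPolynomial σ k}

variable (m) in
def SPolynomialsReduceToZero (G : Set (MvPolynomial σ k)) : Prop :=
  ∀ g ∈ G, ∀ h ∈ G, g ≠ 0 → h ≠ 0 →
    m.sPolynomial g h ∈ m.boundedSpan G (Iic (m.toSyn (m.degree (m.sPolynomial g h))))

theorem sPolynomial_mem_boundedSpan_Iio (hS : SPolynomialsReduceToZero m G) (hg : g ∈ G)
    (hh : h ∈ G) :
    m.sPolynomial g h ∈ m.boundedSpan G (Iio (m.toSyn (m.degree g ⊔ m.degree h))) := by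
  rcases eq_or_ne g 0 with rfl | hg0
  · simp
  rcases eq_or_ne h 0 with rfl | hh0
  · simp
  rcases m.degree_sPolynomial g h with hlt | h0
  · exact boundedSpan_mono (Iic_subset_Iio.mpr hlt) (hS g hg h hh hg0 hh0)
  · simp [h0]

theorem sPolynomial_monomial_mul_mem_boundedSpan_Iio (hS : SPolynomialsReduceToZero m G)
    (hg : g ∈ G) (hh : h ∈ G) {a b δ : σ →₀ ℕ} (ha : a + m.degree g = δ)
    (hb : b + m.degree h = δ) (c c' : k) :
    m.sPolynomial (monomial a c * g) (monomial b c' * h) ∈ m.boundedSpan G (Iio (m.toSyn δ)) := by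
  have hlcm : m.degree g ⊔ m.degree h ≤ δ := sup_le (ha ▸ le_add_self) (hb ▸ le_add_self)
  rw [sPolynomial_monomial_mul, ha, hb, sup_idem]
  have := monomial_mul_mem_boundedSpan_Iio (sPolynomial_mem_boundedSpan_Iio hS hg hh)
    (δ - m.degree g ⊔ m.degree h) (c * c')
  rwa [← map_add, tsub_add_cancel_of_le hlcm] at this

theorem mem_boundedSpan_Iio_of_degree_lt (hS : SPolynomialsReduceToZero m G) {d : m.syn}
    (hf : f ∈ m.boundedSpan G (Iic d)) (hfd : m.toSyn (m.degree f) < d) :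
    f ∈ m.boundedSpan G (Iio d) := by
  rw [← Iio_insert, insert_eq, boundedSpan_union, sup_comm, Submodule.mem_sup] at hf
  obtain ⟨u, hu, v, hv, rfl⟩ := hf
  -- `v` is a sum of terms of degree exactly `d` whose leading coefficients cancel
  refine add_mem hu ?_
  have hud : m.toSyn (m.degree u) < d := by
    rcases eq_or_ne u 0 with rfl | hu0
    · simpa using (m.zero_le _).trans_lt hfd
    · exact toSyn_degree_lt_of_mem_boundedSpan_Iio hu hu0
  have hvd : m.toSyn (m.degree v) < d := by
    rw [show v = u + v - u by abel]
    exact degree_sub_le.trans_lt (max_lt hfd hud)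
  obtain ⟨n, c, p, rfl⟩ := Submodule.mem_span_set'.mp hv
  choose g hg a ha hp using fun i => (p i).2
  have hδ i : a i + m.degree (g i) = m.toSyn.symm d := by
    rw [← mem_singleton_iff.mp (ha i), AddEquiv.symm_apply_apply]
  simp only [hp, smul_monomial_one_mul] at hvd ⊢
  have hdeg : ∀ i ∈ Finset.univ, m.toSyn (m.degree (monomial (a i) (c i) * g i)) = d ∨
      monomial (a i) (c i) * g i = 0 := by
    intro i _
    rcases eq_or_ne (monomial (a i) (c i) * g i) 0 with h0 | h0
    · exact Or.inr h0
    obtain ⟨hc0, hg0⟩ := mul_ne_zero_iff.mp h0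
    classical
    rw [m.degree_mul hc0 hg0, m.degree_monomial, if_neg (by simpa using hc0), hδ,
      AddEquiv.apply_symm_apply]
    exact Or.inl rfl
  obtain ⟨c', hc'⟩ := m.sPolynomial_decomposition' _ hdeg hvd
  rw [hc']
  refine Submodule.sum_mem _ fun i _ => Submodule.sum_mem _ fun j _ => Submodule.smul_mem _ _ ?_
  simpa using
    sPolynomial_monomial_mul_mem_boundedSpan_Iio hS (hg i) (hg j) (hδ i) (hδ j) (c i) (c j)

theorem mem_boundedSpan_Iic_degree (hS : SPolynomialsReduceToZero m G) {d : m.syn}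
    (hf : f ∈ m.boundedSpan G (Iic d)) : f ∈ m.boundedSpan G (Iic (m.toSyn (m.degree f))) := by
  induction d using WellFoundedLT.induction generalizing f with
  | _ d ih =>
  rcases eq_or_ne f 0 with rfl | hf0
  · exact zero_mem _
  rcases (toSyn_degree_le_of_mem_boundedSpan_Iic hf).eq_or_lt with hd | hd
  · rwa [hd]
  · obtain ⟨d', hd', hfd'⟩ :=
      exists_lt_of_mem_boundedSpan_Iio (mem_boundedSpan_Iio_of_degree_lt hS hf hd) hf0
    exact ih d' hd' hfd'

theorem mem_boundedSpan_Iic_degree_of_mem_ideal {I : Ideal (MvPolynomial σ k)} (hGI : G ⊆ I)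
    (hG : ∀ f ∈ I, f ≠ 0 → ∃ g ∈ G, g ≠ 0 ∧ m.degree g ≤ m.degree f) (hf : f ∈ I) :
    f ∈ m.boundedSpan G (Iic (m.toSyn (m.degree f))) := by
  obtain ⟨q, r, hfqr, hdeg, hr⟩ :=
    m.div_set (B := {g ∈ G | g ≠ 0}) (fun _ hb => isUnit_leadingCoeff.mpr hb.2) f
  rw [Finsupp.linearCombination_apply, Finsupp.sum] at hfqr
  have hqI : ∑ b ∈ q.support, q b • (b : MvPolynomial σ k) ∈ I :=
    Submodule.sum_mem _ fun b _ => I.mul_mem_left _ (hGI b.2.1)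
  have hr0 : r = 0 := by
    by_contra hr0
    obtain ⟨g, hg, hg0, hle⟩ :=
      hG r (by rw [eq_sub_of_add_eq' hfqr.symm]; exact I.sub_mem hf hqI) hr0
    exact hr _ (m.degree_mem_support hr0) g ⟨hg, hg0⟩ hle
  have hq : ∑ b ∈ q.support, q b • (b : MvPolynomial σ k) ∈
      m.boundedSpan G (Iic (m.toSyn (m.degree f))) :=
    Submodule.sum_mem _ fun b _ => mul_mem_boundedSpan_Iic b.2.1 (mul_comm (q b) b ▸ hdeg b)
  rw [hr0, add_zero] at hfqr
  rwa [← hfqr] at hq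

theorem sub_monomial_mul_eq_inv_smul_sPolynomial (hf : f ≠ 0) (hg : g ≠ 0) :
    monomial (m.degree f ⊔ m.degree g - m.degree f) (f.coeff (m.degree f))⁻¹ * f -
        monomial (m.degree f ⊔ m.degree g - m.degree g) (g.coeff (m.degree g))⁻¹ * g =
      (m.leadingCoeff f * m.leadingCoeff g)⁻¹ • m.sPolynomial f g := by
  have hf' := m.leadingCoeff_ne_zero_iff.mpr hf
  have hg' := m.leadingCoeff_ne_zero_iff.mpr hg
  rw [sPolynomial_def, smul_sub, ← smul_mul_assoc, ← smul_mul_assoc, smul_monomial,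
    smul_monomial, smul_eq_mul, smul_eq_mul]
  congr 3 <;> simp only [leadingCoeff] at hf' hg' ⊢ <;> field_simp

end Field

end MonomialOrder

section Translation

variable {σ k : Type*} {r : (σ →₀ ℕ) → (σ →₀ ℕ) → Prop} {m : MonomialOrder σ}
  [CommSemiring k] {G : Set (MvPolynomial σ k)} {f : MvPolynomial σ k}

theorem isLM_iff (hm : ∀ a b, m.toSyn a < m.toSyn b ↔ r a b)
    {μ : σ →₀ ℕ} : IsLM r f μ ↔ f ≠ 0 ∧ m.degree f = μ := by
  constructor
  · rintro ⟨hμ, hmax⟩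
    have hf0 : f ≠ 0 := by rintro rfl; simp at hμ
    refine ⟨hf0, by_contra fun hne => ?_⟩
    exact (m.le_degree hμ).not_gt ((hm _ _).mpr (hmax _ (m.degree_mem_support hf0) hne))
  · rintro ⟨hf0, rfl⟩
    exact ⟨m.degree_mem_support hf0, fun c hc hne =>
      (hm _ _).mp ((m.le_degree hc).lt_of_ne (m.toSyn.injective.ne hne))⟩

theorem isRemainder_zero_iff [NoZeroDivisors k] (hm : ∀ a b, m.toSyn a < m.toSyn b ↔ r a b) :
    IsRemainder r G f 0 ↔ f ∈ m.boundedSpan G (Iic (m.toSyn (m.degree f))) := by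
  have le_iff {a b} : m.toSyn a ≤ m.toSyn b ↔ a = b ∨ r a b := by
    rw [le_iff_eq_or_lt, m.toSyn.injective.eq_iff, hm]
  constructor
  · rintro ⟨⟨n, g, q, hg, hf, hdeg⟩, -⟩
    rcases eq_or_ne f 0 with rfl | hf0
    · exact zero_mem _
    rw [add_zero] at hf
    suffices ∑ i, q i * g i ∈ m.boundedSpan G (Iic (m.toSyn (m.degree f))) by rwa [← hf] at this
    refine Submodule.sum_mem _ fun i _ => MonomialOrder.mul_mem_boundedSpan_Iic (hg i) ?_
    rcases eq_or_ne (q i * g i) 0 with h0 | h0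
    · simp [h0]
    · exact le_iff.mpr (hdeg i h0 _ _ ((isLM_iff hm).mpr ⟨h0, rfl⟩) ((isLM_iff hm).mpr ⟨hf0, rfl⟩))
  · intro hf
    obtain ⟨n, c, p, hfp⟩ := Submodule.mem_span_set'.mp hf
    choose g hg a ha hp using fun i => (p i).2
    refine ⟨⟨n, g, fun i => monomial (a i) (c i), hg, ?_, fun i h0 μ μ' hμ hμ' => ?_⟩, by simp⟩
    · rw [add_zero, ← hfp]
      refine Finset.sum_congr rfl fun i _ => ?_
      rw [hp i, smul_monomial_one_mul]
    · obtain ⟨-, rfl⟩ := (isLM_iff hm).mp hμ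
      obtain ⟨-, rfl⟩ := (isLM_iff hm).mp hμ'
      exact le_iff.mp ((m.toSyn_degree_monomial_mul_le _ _ _).trans (ha i))

theorem lmMonomials_eq_image_s8 (hm : ∀ a b, m.toSyn a < m.toSyn b ↔ r a b) :
    lmMonomials r G = (fun μ => monomial μ (1 : k)) '' {μ | ∃ g ∈ G, g ≠ 0 ∧ m.degree g = μ} := by
  ext t
  simp only [lmMonomials, mem_image, mem_ofPred_eq, isLM_iff hm, eq_comm (a := t), and_self_left]

theorem monomial_mem_span_lmMonomials_iff (hm : ∀ a b, m.toSyn a < m.toSyn b ↔ r a b)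
    {μ : σ →₀ ℕ} {c : k} (hc : c ≠ 0) :
    monomial μ c ∈ Ideal.span (lmMonomials r G) ↔ ∃ g ∈ G, g ≠ 0 ∧ m.degree g ≤ μ := by
  classical
  rw [lmMonomials_eq_image_s8 hm, mem_ideal_span_monomial_image, support_monomial, if_neg hc]
  simp [and_assoc]

theorem isGroebnerBasis_iff_s8 {k : Type*} [Field k] {G : Set (MvPolynomial σ k)} (hm : ∀ a b, m.toSyn a < m.toSyn b ↔ r a b)
    {I : Ideal (MvPolynomial σ k)} : IsGroebnerBasis r G I ↔
      G ⊆ I ∧ ∀ f ∈ I, f ≠ 0 → ∃ g ∈ G, g ≠ 0 ∧ m.degree g ≤ m.degree f := by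
  refine and_congr_right fun hGI => ⟨fun hGB f hf hf0 => ?_, fun hG => le_antisymm ?_ ?_⟩
  · rw [← monomial_mem_span_lmMonomials_iff hm (m.coeff_degree_ne_zero_iff.mpr hf0), hGB]
    exact Ideal.subset_span ⟨f, hf, hf0, _, (isLM_iff hm).mpr ⟨hf0, rfl⟩, rfl⟩
  · refine Ideal.span_le.mpr ?_
    rintro _ ⟨μ, ⟨g, hg, hg0, hμ⟩, rfl⟩
    have hc : g.coeff μ ≠ 0 := mem_support_iff.mp hμ.1
    have : monomial μ (1 : k) = C (g.coeff μ)⁻¹ * monomial μ (g.coeff μ) := by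
      rw [C_mul_monomial, inv_mul_cancel₀ hc]
    rw [this]
    exact Ideal.mul_mem_left _ _ (Ideal.subset_span ⟨g, hGI hg, hg0, μ, hμ, rfl⟩)
  · refine Ideal.span_le.mpr ?_
    rintro _ ⟨f, hf, hf0, μ, hμ, rfl⟩
    obtain ⟨-, rfl⟩ := (isLM_iff hm).mp hμ
    exact (monomial_mem_span_lmMonomials_iff hm (m.coeff_degree_ne_zero_iff.mpr hf0)).mpr
      (hG f hf hf0)

end Translation

/-- Proposition 1.13 (Buchberger's criterion): a generating set `G` of an ideal `I` is a
Gröbner base for `I` if and only if for every pair of nonzero `g, h ∈ G` the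
`S`-polynomial `S(g,h) = (lcm(lm g, lm h)/lt g)·g − (lcm(lm g, lm h)/lt h)·h`
has `0` as a remainder with respect to `G`. -/
theorem buchberger_criterion {k : Type*} [Field k]
    (r : (ℕ →₀ ℕ) → (ℕ →₀ ℕ) → Prop) (hr : IsMonomialOrder r)
    (I : Ideal (MvPolynomial ℕ k)) (G : Set (MvPolynomial ℕ k))
    (hGI : Ideal.span G = I) :
    IsGroebnerBasis r G I ↔
      ∀ g ∈ G, ∀ h ∈ G, g ≠ 0 → h ≠ 0 →
        ∀ m m', IsLM r g m → IsLM r h m' →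
          IsRemainder r G
            (monomial (m ⊔ m' - m) (MvPolynomial.coeff m g)⁻¹ * g -
              monomial (m ⊔ m' - m') (MvPolynomial.coeff m' h)⁻¹ * h) 0 := by
  obtain ⟨ord, hord⟩ := hr.exists_monomialOrder
  have hGI' : G ⊆ I := hGI ▸ Ideal.subset_span
  rw [isGroebnerBasis_iff_s8 hord, and_iff_right hGI']
  constructor
  · intro hG g hg h hh _ _ _ _ _ _
    rw [isRemainder_zero_iff hord]
    exact ord.mem_boundedSpan_Iic_degree_of_mem_ideal hGI' hG
      (I.sub_mem (I.mul_mem_left _ (hGI' hg)) (I.mul_mem_left _ (hGI' hh)))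
  · intro hS f hf hf0
    obtain ⟨d, hd⟩ := ord.exists_mem_boundedSpan_of_mem_span (hGI ▸ hf)
    refine ord.exists_degree_le_of_mem_boundedSpan hf0 (ord.mem_boundedSpan_Iic_degree ?_ hd)
    intro g hg h hh hg0 hh0
    have hgh := hS g hg h hh hg0 hh0 _ _ ((isLM_iff hord).mpr ⟨hg0, rfl⟩)
      ((isLM_iff hord).mpr ⟨hh0, rfl⟩)
    have hc : ord.leadingCoeff g * ord.leadingCoeff h ≠ 0 :=
      mul_ne_zero (ord.leadingCoeff_ne_zero_iff.mpr hg0) (ord.leadingCoeff_ne_zero_iff.mpr hh0)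
    rwa [isRemainder_zero_iff hord, ord.sub_monomial_mul_eq_inv_smul_sPolynomial hg0 hh0,
      ord.degree_smul_of_isRegular (IsRegular.of_ne_zero (inv_ne_zero hc)),
      Submodule.smul_mem_iff _ (inv_ne_zero hc)] at hgh

end
end

section
/- Let R be a commutative ring and let (f_α)_{α∈Ω} be a family of elements of R indexed by a well-ordered set Ω. If the family satisfies the FR-condition, then it is a regular sequence on R. -/
noncomputable section

/-- Lemma 1.16: a family indexed by a well-ordered set satisfying the FR-condition is a
regular sequence. -/
theorem isRegularSeq_of_satisfiesFR {R : Type*} [CommRing R] {Ω : Type*}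
    (lt : Ω → Ω → Prop) (hwo : IsWellOrder Ω lt) (f : Ω → R)
    (h : SatisfiesFR lt f) : IsRegularSeq lt f := by
  classical
  haveI := hwo
  letI : LinearOrder Ω := linearOrderOfSTO lt
  have hlt : ∀ a b : Ω, a < b ↔ lt a b := fun a b => Iff.rfl
  constructor
  · intro htop
    have h1 : (1 : R) ∈ Ideal.span (Set.range f) := htop ▸ Submodule.mem_top
    obtain ⟨t, hts, hmem⟩ := Submodule.mem_span_finite_of_mem_span h1
    rw [← Set.image_univ] at hts
    obtain ⟨s', hs'sub, hs'img⟩ := Finset.subset_set_image_iff.mp hts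
    set k := s'.card with hk
    set e := s'.orderEmbOfFin rfl with he
    have hemono : ∀ i j : Fin k, i < j → lt (e i) (e j) := fun i j hij =>
      (hlt _ _).mp (e.strictMono hij)
    apply (h k (fun i => e i) hemono).1
    rw [Ideal.eq_top_iff_one]
    have hrange : Set.range (fun i => f (e i)) = (t : Set R) := by
      rw [← hs'img]
      have : Set.range (fun i : Fin k => f (e i)) = f '' Set.range e := by
        rw [← Set.range_comp]; rfl
      rw [this, Finset.range_orderEmbOfFin, Finset.coe_image]
    rw [hrange]
    exact hmem
  · intro α g hg
    obtain ⟨t, hts, hmem⟩ := Submodule.mem_span_finite_of_mem_span hg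
    obtain ⟨s', hs'sub, hs'img⟩ := Finset.subset_set_image_iff.mp hts
    set k := s'.card with hk
    set e := s'.orderEmbOfFin rfl with he
    have hemono : ∀ i j : Fin k, i < j → lt (e i) (e j) := fun i j hij =>
      (hlt _ _).mp (e.strictMono hij)
    set α' : Fin (k + 1) → Ω := Fin.snoc (fun i => e i) α with hα'
    have hα'cast : ∀ i : Fin k, α' i.castSucc = e i := fun i => Fin.snoc_castSucc _ _ _
    have hα'last : α' (Fin.last k) = α := Fin.snoc_last _ _
    have hmono : ∀ i j : Fin (k + 1), i < j → lt (α' i) (α' j) := by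
      intro i j hij
      rcases Fin.eq_castSucc_or_eq_last j with ⟨j', rfl⟩ | rfl
      · have hi : i ≠ Fin.last k := by
          intro hie; subst hie
          have := lt_trans hij (Fin.castSucc_lt_last j')
          exact lt_irrefl _ this
        obtain ⟨i', rfl⟩ := Fin.exists_castSucc_eq.mpr hi
        rw [hα'cast, hα'cast]
        exact hemono i' j' (by exact_mod_cast hij)
      · have hi : i ≠ Fin.last k := Fin.ne_last_of_lt hij
        obtain ⟨i', rfl⟩ := Fin.exists_castSucc_eq.mpr hi
        rw [hα'cast, hα'last]
        exact hs'sub (Finset.orderEmbOfFin_mem _ _ _)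
    have hset : {i : Fin (k + 1) | i < Fin.last k} = Set.range Fin.castSucc := by
      ext i
      simp only [Set.mem_setOf_eq, Set.mem_range]
      constructor
      · intro hi
        have hi' : (i : ℕ) < k := hi
        exact ⟨⟨i, hi'⟩, Fin.ext rfl⟩
      · rintro ⟨j, rfl⟩
        exact Fin.castSucc_lt_last j
    have himg : (fun i => f (α' i)) '' {i : Fin (k + 1) | i < Fin.last k} = (t : Set R) := by
      rw [hset, ← Set.range_comp]
      have : ((fun i => f (α' i)) ∘ Fin.castSucc) = fun j : Fin k => f (e j) := by
        funext j; simp only [Function.comp_apply, hα'cast]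
      rw [this, ← hs'img]
      have h2 : Set.range (fun i : Fin k => f (e i)) = f '' Set.range e := by
        rw [← Set.range_comp]; rfl
      rw [h2, Finset.range_orderEmbOfFin, Finset.coe_image]
    have key := (h (k + 1) α' hmono).2 (Fin.last k) g
    simp only [hα'last, himg] at key
    have hg' : g ∈ Ideal.span (t : Set R) := key hmem
    exact Ideal.span_mono hts hg'

end
end

section
/- Let (f_α)_{α∈Ω} be a regular sequence on a commutative ring R indexed by a well-ordered set Ω, and set I = (f_α : α∈Ω)R. Let 𝕐 = {Y_α : α ∈ Ω} be a family of indeterminates over R indexed by Ω, and for F ∈ R[𝕐] let F(f) ∈ R denote the result of substituting f_α for Y_α. If F ∈ R[𝕐] is homogeneous of degree d in the variables 𝕐 and F(f) ∈ I^{d+1}, then F ∈ I·R[𝕐], i.e. all coefficients of F lie in I. -/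
noncomputable section

/-!
Regular sequences are quasi-regular: with `J = (f_α)`, the map `(R ⧸ J)[𝕐] → gr_J R` is injective.
For the subfamily indexed by `s ⊆ Ω` this property involves only finitely many indices at a time,
so it passes to unions of chains of initial segments. It passes from `B` to `insert γ B` when `f_γ`
is a non-zerodivisor modulo `J_B`: then `f_γ` is also a non-zerodivisor on every
`J_B^k / J_B^(k+1)`, a free `R ⧸ J_B`-module; and if `G(f) = 0`, writing `G = Y_γ H + P` with `P`
free of `Y_γ` gives `f_γ H(f) = -P(f) ∈ J_B^(k+1)`, hence `H(f) ∈ J_B^(k+1)`, so `H` is handled by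
induction on the degree and `P` by quasi-regularity on `B`. Transfinite induction along `Ω`
concludes.
-/

open MvPolynomial

lemma Finsupp.prod_pow_mem_pow_degree {R Ω : Type*} [CommSemiring R] {x : Ω → R} {J : Ideal R}
    {m : Ω →₀ ℕ} (h : ∀ i ∈ m.support, x i ∈ J) : (m.prod fun i e => x i ^ e) ∈ J ^ m.degree := by
  rw [Finsupp.prod, Finsupp.degree_apply, ← Finset.prod_pow_eq_pow_sum]
  exact Ideal.prod_mem_prod fun i hi => Ideal.pow_mem_pow (h i hi) _

namespace MvPolynomial

section

variable {R Ω : Type*} [CommSemiring R]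

lemma IsHomogeneous.modMonomial {F : MvPolynomial Ω R} {n : ℕ} (hF : F.IsHomogeneous n)
    (m : Ω →₀ ℕ) : (F.modMonomial m).IsHomogeneous n := by
  intro d hd
  by_cases hmd : m ≤ d
  · exact absurd (coeff_modMonomial_of_le F hmd) hd
  · exact hF (by rwa [coeff_modMonomial_of_not_le F hmd] at hd)

lemma IsHomogeneous.divMonomial {F : MvPolynomial Ω R} {n : ℕ} {m : Ω →₀ ℕ}
    (hF : F.IsHomogeneous (n + m.degree)) : (F.divMonomial m).IsHomogeneous n := by
  intro d hd
  have hdeg : (m + d).degree = n + m.degree :=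
    (hF.degree_eq_sum_deg_support (mem_support_iff.2 hd)).symm
  rw [map_add] at hdeg
  rw [Pi.one_def, ← Finsupp.degree_eq_weight_one]
  omega

lemma mem_supported_of_forall_coeff_ne_zero {F : MvPolynomial Ω R} {s : Set Ω}
    (h : ∀ d, coeff d F ≠ 0 → ∀ i ∈ d.support, i ∈ s) : F ∈ supported R s := by
  rw [mem_supported]
  intro i hi
  obtain ⟨d, hd, hid⟩ := (mem_vars_iff_mem_support i).1 hi
  exact h d (mem_support_iff.1 hd) i hid

lemma mem_of_mem_supported {F : MvPolynomial Ω R} {s : Set Ω} (hF : F ∈ supported R s)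
    {d : Ω →₀ ℕ} (hd : coeff d F ≠ 0) {i : Ω} (hi : i ∈ d.support) : i ∈ s :=
  mem_supported.1 hF ((mem_vars_iff_mem_support i).2 ⟨d, mem_support_iff.2 hd, hi⟩)

lemma divMonomial_mem_supported {F : MvPolynomial Ω R} {s : Set Ω} (hF : F ∈ supported R s)
    (m : Ω →₀ ℕ) : F.divMonomial m ∈ supported R s :=
  mem_supported_of_forall_coeff_ne_zero fun d hd i hi => mem_of_mem_supported hF hd <| by
    simp only [Finsupp.mem_support_iff, Finsupp.add_apply] at hi ⊢
    omega

lemma modMonomial_single_mem_supported {F : MvPolynomial Ω R} {s : Set Ω} {γ : Ω}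
    (hF : F ∈ supported R (insert γ s)) : F.modMonomial (Finsupp.single γ 1) ∈ supported R s := by
  refine mem_supported_of_forall_coeff_ne_zero fun d hd i hi => ?_
  by_cases hγd : Finsupp.single γ 1 ≤ d
  · exact absurd (coeff_modMonomial_of_le F hγd) hd
  rw [coeff_modMonomial_of_not_le F hγd] at hd
  refine (mem_of_mem_supported hF hd hi).resolve_left ?_
  rintro rfl
  exact hγd (Finsupp.single_le_iff.2 (Nat.one_le_iff_ne_zero.2 (Finsupp.mem_support_iff.1 hi)))

end

variable {R Ω : Type*} [CommRing R] (f : Ω → R)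

lemma aeval_mem_mul_span_image_pow {I : Ideal R} {s : Set Ω} {k : ℕ} {G : MvPolynomial Ω R}
    (hG : G.IsHomogeneous k) (hGs : G ∈ supported R s) (hGI : G ∈ Ideal.map C I) :
    aeval f G ∈ I * Ideal.span (f '' s) ^ k := by
  rw [G.as_sum, map_sum]
  refine Ideal.sum_mem _ fun d hd => ?_
  rw [aeval_monomial, hG.degree_eq_sum_deg_support hd]
  exact Ideal.mul_mem_mul (mem_map_C_iff.1 hGI d) <| Finsupp.prod_pow_mem_pow_degree fun i hi =>
    Ideal.subset_span ⟨i, mem_of_mem_supported hGs (mem_support_iff.1 hd) hi, rfl⟩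

lemma aeval_mem_span_image_pow {s : Set Ω} {k : ℕ} {G : MvPolynomial Ω R}
    (hG : G.IsHomogeneous k) (hGs : G ∈ supported R s) :
    aeval f G ∈ Ideal.span (f '' s) ^ k := by
  simpa using aeval_mem_mul_span_image_pow f (I := ⊤) hG hGs (by simp [mem_map_C_iff])

lemma exists_isHomogeneous_mem_supported_aeval_eq {s : Set Ω} {k : ℕ} {x : R}
    (hx : x ∈ Ideal.span (f '' s) ^ k) :
    ∃ G : MvPolynomial Ω R, G.IsHomogeneous k ∧ G ∈ supported R s ∧ aeval f G = x := by
  rw [Set.image_eq_range, Ideal.mem_span_pow_iff_exists_isHomogeneous] at hx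
  obtain ⟨p, hp, rfl⟩ := hx
  refine ⟨rename Subtype.val p, hp.rename_isHomogeneous, ?_, ?_⟩
  · rw [supported_eq_range_rename]
    exact ⟨p, rfl⟩
  · simp only [aeval_rename]
    rfl

lemma exists_isHomogeneous_mem_supported_mem_map_C_aeval_eq {I : Ideal R} {s : Set Ω} {k : ℕ}
    {x : R} (hx : x ∈ I * Ideal.span (f '' s) ^ k) :
    ∃ G : MvPolynomial Ω R, G.IsHomogeneous k ∧ G ∈ supported R s ∧ G ∈ Ideal.map C I ∧
      aeval f G = x := by
  refine Submodule.mul_induction_on hx (fun a ha y hy => ?_) ?_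
  · obtain ⟨G, hG, hGs, rfl⟩ := exists_isHomogeneous_mem_supported_aeval_eq f hy
    exact ⟨C a * G, hG.C_mul a, Subalgebra.mul_mem _ (Subalgebra.algebraMap_mem _ a) hGs,
      Ideal.mul_mem_right _ _ (Ideal.mem_map_of_mem _ ha), by simp⟩
  · rintro x y ⟨G, hG, hGs, hGI, rfl⟩ ⟨H, hH, hHs, hHI, rfl⟩
    exact ⟨G + H, hG.add hH, add_mem hGs hHs, add_mem hGI hHI, map_add _ _ _⟩

end MvPolynomial

section QuasiRegular

variable {R Ω : Type*} [CommRing R] {f : Ω → R}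

/-- With `J = (f i : i ∈ s)`, the natural map `(R ⧸ J)[Y_i : i ∈ s]_k → J ^ k / J ^ (k + 1)` is
injective. -/
def QuasiRegularInDegree (f : Ω → R) (s : Set Ω) (k : ℕ) : Prop :=
  ∀ ⦃G : MvPolynomial Ω R⦄, G.IsHomogeneous k → G ∈ supported R s →
    aeval f G ∈ Ideal.span (f '' s) ^ (k + 1) → G ∈ Ideal.map C (Ideal.span (f '' s))

def QuasiRegularOn (f : Ω → R) (s : Set Ω) : Prop :=
  ∀ k, QuasiRegularInDegree f s k

lemma quasiRegularInDegree_zero (s : Set Ω) : QuasiRegularInDegree f s 0 := by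
  intro G hG _ hGf
  obtain ⟨c, rfl⟩ : ∃ c, G = C c :=
    ⟨_, (totalDegree_eq_zero_iff_eq_C).1 ((totalDegree_zero_iff_isHomogeneous _).2 hG)⟩
  rw [aeval_C, Algebra.algebraMap_self_apply, zero_add, pow_one] at hGf
  exact Ideal.mem_map_of_mem _ hGf

lemma quasiRegularInDegree_of_forall_aeval_eq_zero {s : Set Ω} {k : ℕ}
    (h : ∀ ⦃G : MvPolynomial Ω R⦄, G.IsHomogeneous k → G ∈ supported R s → aeval f G = 0 →
      G ∈ Ideal.map C (Ideal.span (f '' s))) :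
    QuasiRegularInDegree f s k := by
  intro G hG hGs hGf
  obtain ⟨G₀, hG₀, hG₀s, hG₀J, hG₀f⟩ :=
    exists_isHomogeneous_mem_supported_mem_map_C_aeval_eq f
      (pow_succ' (Ideal.span (f '' s)) k ▸ hGf)
  rw [← sub_add_cancel G G₀]
  exact add_mem (h (hG.sub hG₀) (sub_mem hGs hG₀s) (by rw [map_sub, hG₀f, sub_self])) hG₀J

lemma quasiRegularOn_empty : QuasiRegularOn f ∅ := by
  intro k G _ hGs hG
  rw [supported_empty, Algebra.mem_bot] at hGs
  obtain ⟨c, rfl⟩ := hGs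
  rw [Set.image_empty, Ideal.span_empty, Ideal.bot_pow k.succ_ne_zero, AlgHom.commutes,
    Algebra.algebraMap_self_apply, Ideal.mem_bot] at hG
  simp [hG]

lemma QuasiRegularOn.of_forall_finset {s : Set Ω}
    (h : ∀ D : Finset Ω, ↑D ⊆ s → ∃ t ⊆ s, ↑D ⊆ t ∧ QuasiRegularOn f t) :
    QuasiRegularOn f s := by
  classical
  intro k G hG hGs hGf
  obtain ⟨G₀, hG₀, hG₀s, hG₀f⟩ := exists_isHomogeneous_mem_supported_aeval_eq f hGf
  obtain ⟨t, hts, hDt, ht⟩ := h (G.vars ∪ G₀.vars) <| by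
    rw [Finset.coe_union]
    exact Set.union_subset (mem_supported.1 hGs) (mem_supported.1 hG₀s)
  rw [Finset.coe_union, Set.union_subset_iff, ← mem_supported, ← mem_supported] at hDt
  have hGt := ht k hG hDt.1 (hG₀f ▸ aeval_mem_span_image_pow f hG₀ hDt.2)
  exact Ideal.map_mono (Ideal.span_mono (Set.image_mono hts)) hGt

lemma QuasiRegularOn.of_isLowerSet [LinearOrder Ω] {s : Set Ω} (hs : IsLowerSet s)
    (h : ∀ γ ∈ s, QuasiRegularOn f (Set.Iic γ)) : QuasiRegularOn f s := by
  refine .of_forall_finset fun D hD => ?_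
  rcases D.eq_empty_or_nonempty with rfl | hne
  · exact ⟨∅, Set.empty_subset s, by simp, quasiRegularOn_empty⟩
  · have hmax : D.max' hne ∈ s := hD (D.max'_mem hne)
    exact ⟨_, hs.Iic_subset hmax, fun i hi => D.le_max' i hi, h _ hmax⟩

variable {B : Set Ω} {γ : Ω}

lemma QuasiRegularOn.mem_pow_of_mul_mem_pow (hB : QuasiRegularOn f B)
    (hγ : ∀ y, y * f γ ∈ Ideal.span (f '' B) → y ∈ Ideal.span (f '' B)) :
    ∀ {k : ℕ} {y : R}, y * f γ ∈ Ideal.span (f '' B) ^ k → y ∈ Ideal.span (f '' B) ^ k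
  | 0, _, _ => by simp
  | k + 1, y, hy => by
    obtain ⟨V, hV, hVs, rfl⟩ := exists_isHomogeneous_mem_supported_aeval_eq f
      (hB.mem_pow_of_mul_mem_pow hγ (Ideal.pow_le_pow_right k.le_succ hy))
    have hγV : C (f γ) * V ∈ Ideal.map C (Ideal.span (f '' B)) :=
      hB k (hV.C_mul _) (Subalgebra.mul_mem _ (Subalgebra.algebraMap_mem _ _) hVs)
        (by simpa [mul_comm] using hy)
    have hVJ : V ∈ Ideal.map C (Ideal.span (f '' B)) := mem_map_C_iff.2 fun d =>
      hγ _ (by rw [mul_comm, ← coeff_C_mul]; exact mem_map_C_iff.1 hγV d)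
    simpa [pow_succ'] using aeval_mem_mul_span_image_pow f hV hVs hVJ

lemma QuasiRegularOn.quasiRegularInDegree_insert_succ (hB : QuasiRegularOn f B)
    (hγ : ∀ y, y * f γ ∈ Ideal.span (f '' B) → y ∈ Ideal.span (f '' B)) {k : ℕ}
    (hk : QuasiRegularInDegree f (insert γ B) k) :
    QuasiRegularInDegree f (insert γ B) (k + 1) := by
  have hJJ' : Ideal.span (f '' B) ≤ Ideal.span (f '' insert γ B) :=
    Ideal.span_mono (Set.image_mono (Set.subset_insert γ B))
  refine quasiRegularInDegree_of_forall_aeval_eq_zero fun F hF hFs hF0 => ?_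
  set H := F.divMonomial (Finsupp.single γ 1)
  set P := F.modMonomial (Finsupp.single γ 1)
  have hHP : X γ * H + P = F := divMonomial_add_modMonomial_single _ _
  have hH : H.IsHomogeneous k :=
    IsHomogeneous.divMonomial (m := Finsupp.single γ 1) (by rwa [Finsupp.degree_single])
  have hP : P.IsHomogeneous (k + 1) := hF.modMonomial _
  have hPs : P ∈ supported R B := modMonomial_single_mem_supported hFs
  have hHP0 : aeval f H * f γ + aeval f P = 0 := by
    rw [← hF0, ← hHP, map_add, map_mul, aeval_X, mul_comm]
  have hHJ : aeval f H ∈ Ideal.span (f '' B) ^ (k + 1) := hB.mem_pow_of_mul_mem_pow hγ <| by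
    rw [eq_neg_of_add_eq_zero_left hHP0]
    exact neg_mem (aeval_mem_span_image_pow f hP hPs)
  obtain ⟨V, hV, hVs, hVH⟩ := exists_isHomogeneous_mem_supported_aeval_eq f hHJ
  have hPV : P + C (f γ) * V ∈ Ideal.map C (Ideal.span (f '' B)) := by
    refine hB _ (hP.add (hV.C_mul _)) ?_ ?_
    · exact add_mem hPs (Subalgebra.mul_mem _ (Subalgebra.algebraMap_mem _ _) hVs)
    · have hPV0 : aeval f (P + C (f γ) * V) = 0 := by
        rw [map_add, map_mul, aeval_C, Algebra.algebraMap_self_apply, hVH]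
        linear_combination hHP0
      exact hPV0 ▸ zero_mem _
  have hH' : H ∈ Ideal.map C (Ideal.span (f '' insert γ B)) :=
    hk hH (divMonomial_mem_supported hFs _) (Ideal.pow_right_mono hJJ' _ hHJ)
  have hfγ : C (f γ) ∈ Ideal.map (C : R →+* MvPolynomial Ω R) (Ideal.span (f '' insert γ B)) :=
    Ideal.mem_map_of_mem _ (Ideal.subset_span ⟨γ, Set.mem_insert γ B, rfl⟩)
  rw [← hHP, ← add_sub_cancel_right P (C (f γ) * V)]
  exact add_mem (Ideal.mul_mem_left _ _ hH')
    (sub_mem (Ideal.map_mono hJJ' hPV) (Ideal.mul_mem_right _ _ hfγ))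

protected lemma QuasiRegularOn.insert (hB : QuasiRegularOn f B)
    (hγ : ∀ y, y * f γ ∈ Ideal.span (f '' B) → y ∈ Ideal.span (f '' B)) :
    QuasiRegularOn f (insert γ B) :=
  Nat.rec (quasiRegularInDegree_zero _) fun _ => hB.quasiRegularInDegree_insert_succ hγ

theorem IsRegularSeq.quasiRegularOn_univ [LinearOrder Ω] [WellFoundedLT Ω]
    (hf : IsRegularSeq (· < ·) f) : QuasiRegularOn f Set.univ := by
  have hIic (γ : Ω) : QuasiRegularOn f (Set.Iic γ) := by
    induction γ using WellFoundedLT.induction with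
    | _ γ ih =>
      rw [← Set.Iio_insert]
      exact (QuasiRegularOn.of_isLowerSet (isLowerSet_Iio γ) ih).insert (hf.2 γ)
  exact .of_isLowerSet isLowerSet_univ fun γ _ => hIic γ

end QuasiRegular

/-- Lemma 1.17: if `(f_α)` is a regular sequence generating the ideal `I`, and
`F ∈ R[Y_α : α ∈ Ω]` is homogeneous of degree `d` with `F(f) ∈ I^{d+1}`, then all
coefficients of `F` lie in `I` (i.e. `F ∈ I·R[𝕐]`). -/
theorem coeff_mem_of_aeval_mem_pow {R : Type*} [CommRing R] {Ω : Type*}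
    (lt : Ω → Ω → Prop) (hwo : IsWellOrder Ω lt) (f : Ω → R)
    (hreg : IsRegularSeq lt f) (d : ℕ) (F : MvPolynomial Ω R)
    (hF : F.IsHomogeneous d)
    (hFf : MvPolynomial.aeval f F ∈ (Ideal.span (Set.range f)) ^ (d + 1)) :
    ∀ m, MvPolynomial.coeff m F ∈ Ideal.span (Set.range f) := by
  let := IsWellOrder.linearOrder lt
  have : WellFoundedLT Ω := ⟨hwo.wf⟩
  have hF' := hreg.quasiRegularOn_univ d hF (by simp) (by rwa [Set.image_univ])
  rw [Set.image_univ] at hF'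
  exact mem_map_C_iff.1 hF'

end
end

section
/- Let (f_α)_{α∈Ω} be a regular sequence on a commutative ring R indexed by a well-ordered set Ω, and set I = (f_α : α∈Ω)R. Then for every n ∈ ℕ, the quotient I^n/I^{n+1} is a free module over R/I. -/
/-!
Call the family quasi-regular on `V ⊆ Ω` if every form of degree `n` in the `X_γ`, `γ ∈ V`,
whose value at `f` lies in `I_V ^ (n + 1)` has all its coefficients in `I_V`, where
`I_V = (f_γ : γ ∈ V)`. On all of `Ω` this says precisely that the values of the degree-`n`
monomials form a basis of `Iⁿ/Iⁿ⁺¹` over `R/I`.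

Quasi-regularity involves only finitely many variables at a time, so it passes to unions of
initial segments, and by transfinite induction it remains to pass from `V = {β < α}` to
`V ∪ {α}`. Quasi-regularity of `V` upgrades "`f_α` is a non-zerodivisor modulo `I_V`" to
"modulo every `I_V ^ m`". Together with
`(I_V + (f_α)) ^ (m + 1) = I_V ^ (m + 1) + f_α (I_V + (f_α)) ^ m`, this lets one split a form
as `p₀ + X_α q` with `p₀` free of `X_α`, show first that the coefficients of `p₀` lie in
`I_V + (f_α)`, and then treat `q` by induction on the degree.
-/

noncomputable section

open MvPolynomial

section QuasiRegular

variable {R : Type*} [CommRing R] {Ω : Type*}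

def IsQuasiRegularOn (f : Ω → R) (V : Set Ω) : Prop :=
  ∀ (n : ℕ) (p : MvPolynomial Ω R), p ∈ supported R V → p.IsHomogeneous n →
    eval f p ∈ Ideal.span (f '' V) ^ (n + 1) → ∀ μ, p.coeff μ ∈ Ideal.span (f '' V)

namespace MvPolynomial

theorem mem_supported_iff_forall_coeff {V : Set Ω} {p : MvPolynomial Ω R} :
    p ∈ supported R V ↔ ∀ μ, p.coeff μ ≠ 0 → ↑μ.support ⊆ V := by
  simp only [mem_supported, Set.subset_def, Finset.mem_coe, mem_vars_iff_mem_support,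
    mem_support_iff, Finsupp.mem_support_iff]
  exact ⟨fun h μ hμ i hi => h i ⟨μ, hμ, hi⟩, fun h i ⟨μ, hμ, hi⟩ => h μ hμ i hi⟩

theorem isHomogeneous_iff_forall_coeff {p : MvPolynomial Ω R} {n : ℕ} :
    p.IsHomogeneous n ↔ ∀ μ, p.coeff μ ≠ 0 → μ.degree = n := by
  simp only [IsHomogeneous, IsWeightedHomogeneous, Finsupp.degree_eq_weight_one]
  rfl

theorem eval_mem_mul_pow (f : Ω → R) {V : Set Ω} {K : Ideal R} {p : MvPolynomial Ω R} {n : ℕ}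
    (hp : p ∈ supported R V) (hh : p.IsHomogeneous n) (hK : ∀ μ, p.coeff μ ∈ K) :
    eval f p ∈ K * Ideal.span (f '' V) ^ n := by
  rw [p.as_sum, map_sum]
  refine Ideal.sum_mem _ fun μ hμ => ?_
  have hμ' := mem_support_iff.1 hμ
  rw [eval_monomial, ← isHomogeneous_iff_forall_coeff.1 hh μ hμ', Finsupp.prod,
    Finsupp.degree_apply, ← Finset.prod_pow_eq_pow_sum]
  refine Ideal.mul_mem_mul (hK μ) (Ideal.prod_mem_prod fun i hi => Ideal.pow_mem_pow ?_ _)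
  exact Ideal.subset_span ⟨i, mem_supported_iff_forall_coeff.1 hp μ hμ' hi, rfl⟩

theorem eval_mem_pow (f : Ω → R) {V : Set Ω} {p : MvPolynomial Ω R} {n : ℕ}
    (hp : p ∈ supported R V) (hh : p.IsHomogeneous n) :
    eval f p ∈ Ideal.span (f '' V) ^ n := by
  simpa using eval_mem_mul_pow f (K := ⊤) hp hh fun _ => Submodule.mem_top

theorem exists_eval_eq_of_mem_pow (f : Ω → R) {V : Set Ω} {n : ℕ} {x : R}
    (hx : x ∈ Ideal.span (f '' V) ^ n) :
    ∃ p ∈ supported R V, p.IsHomogeneous n ∧ eval f p = x := by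
  let forms (n : ℕ) : Ideal R :=
    (homogeneousSubmodule Ω R n ⊓ Subalgebra.toSubmodule (supported R V)).map
      (aeval f).toLinearMap
  have mem_forms {n : ℕ} {p : MvPolynomial Ω R} (hp : p ∈ supported R V)
      (hh : p.IsHomogeneous n) : eval f p ∈ forms n :=
    ⟨p, ⟨hh, hp⟩, by simp⟩
  suffices Ideal.span (f '' V) ^ n ≤ forms n by
    obtain ⟨p, ⟨hh, hp⟩, rfl⟩ := this hx
    exact ⟨p, hp, hh, by simp⟩
  clear hx x
  induction n with
  | zero =>
    rw [pow_zero, Ideal.one_eq_top, top_le_iff, Ideal.eq_top_iff_one, ← eval_C (f := f) 1]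
    exact mem_forms (Subalgebra.algebraMap_mem _ _) (isHomogeneous_C _ _)
  | succ n ih =>
    rw [pow_succ, Submodule.mul_le]
    intro a ha b hb
    obtain ⟨p, ⟨hp, hp'⟩, rfl⟩ := ih ha
    have : Ideal.span (f '' V) ≤ forms 1 := by
      rw [Ideal.span_le]
      rintro _ ⟨γ, hγ, rfl⟩
      rw [← eval_X (f := f)]
      exact mem_forms (Algebra.subset_adjoin ⟨γ, hγ, rfl⟩) (isHomogeneous_X R γ)
    obtain ⟨q, ⟨hq, hq'⟩, rfl⟩ := this hb
    simp only [AlgHom.toLinearMap_apply, ← map_mul]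
    exact ⟨p * q, ⟨hp.mul hq, Subalgebra.mul_mem _ hp' hq'⟩, rfl⟩

theorem coeff_mem_of_isHomogeneous_zero (f : Ω → R) {I : Ideal R} {p : MvPolynomial Ω R}
    (hh : p.IsHomogeneous 0) (hp : eval f p ∈ I) (μ : Ω →₀ ℕ) : p.coeff μ ∈ I := by
  classical
  rw [totalDegree_eq_zero_iff_eq_C.1 ((totalDegree_zero_iff_isHomogeneous _).2 hh)] at hp ⊢
  rw [eval_C] at hp
  rw [coeff_C]
  split_ifs
  exacts [hp, I.zero_mem]

theorem exists_eq_add_X_mul {V : Set Ω} {γ : Ω} {n : ℕ} {p : MvPolynomial Ω R}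
    (hp : p ∈ supported R (insert γ V)) (hh : p.IsHomogeneous (n + 1)) :
    ∃ p₀ q : MvPolynomial Ω R, p₀ ∈ supported R V ∧ p₀.IsHomogeneous (n + 1) ∧
      q ∈ supported R (insert γ V) ∧ q.IsHomogeneous n ∧ p = p₀ + X γ * q := by
  rw [mem_supported_iff_forall_coeff] at hp
  rw [isHomogeneous_iff_forall_coeff] at hh
  refine ⟨p.modMonomial (Finsupp.single γ 1), p.divMonomial (Finsupp.single γ 1),
    ?_, ?_, ?_, ?_, (modMonomial_add_divMonomial_single p γ).symm⟩
  · rw [mem_supported_iff_forall_coeff]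
    intro μ hμ i hi
    have hγμ : ¬ Finsupp.single γ 1 ≤ μ := fun h => hμ (coeff_modMonomial_of_le p h)
    rw [coeff_modMonomial_of_not_le p hγμ] at hμ
    rw [Finsupp.single_le_iff, Nat.one_le_iff_ne_zero, not_not] at hγμ
    refine (hp μ hμ hi).resolve_left ?_
    rintro rfl
    exact Finsupp.mem_support_iff.1 hi hγμ
  · rw [isHomogeneous_iff_forall_coeff]
    intro μ hμ
    have hγμ : ¬ Finsupp.single γ 1 ≤ μ := fun h => hμ (coeff_modMonomial_of_le p h)
    rw [coeff_modMonomial_of_not_le p hγμ] at hμ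
    exact hh μ hμ
  · rw [mem_supported_iff_forall_coeff]
    intro μ hμ
    rw [coeff_divMonomial] at hμ
    exact subset_trans (Finset.coe_subset.2 (Finsupp.support_mono le_add_self)) (hp _ hμ)
  · rw [isHomogeneous_iff_forall_coeff]
    intro μ hμ
    rw [coeff_divMonomial] at hμ
    have := hh _ hμ
    rw [map_add, Finsupp.degree_single] at this
    omega

end MvPolynomial

theorem Ideal.sup_pow_succ_le (I J : Ideal R) (m : ℕ) :
    (I ⊔ J) ^ (m + 1) ≤ I * (I ⊔ J) ^ m ⊔ J ^ (m + 1) := by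
  induction m with
  | zero => simp
  | succ m ih =>
    calc (I ⊔ J) ^ (m + 1 + 1) = (I ⊔ J) ^ (m + 1) * (I ⊔ J) := pow_succ _ _
      _ ≤ (I * (I ⊔ J) ^ m ⊔ J ^ (m + 1)) * (I ⊔ J) := Ideal.mul_mono_left ih
      _ ≤ I * (I ⊔ J) ^ (m + 1) ⊔ J ^ (m + 1 + 1) := by
        rw [sup_mul, mul_assoc, ← pow_succ, mul_sup, ← pow_succ]
        refine sup_le le_sup_left (sup_le ?_ le_sup_right)
        rw [mul_comm]
        exact le_sup_of_le_left (Ideal.mul_mono_right (Ideal.pow_right_mono le_sup_right _))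

theorem Ideal.mem_pow_of_mul_mem_sup_pow {I : Ideal R} {x : R}
    (hx : ∀ m z, z * x ∈ I ^ m → z ∈ I ^ m) {m : ℕ} {z : R}
    (hz : z * x ∈ (Ideal.span {x} ⊔ I) ^ (m + 1)) : z ∈ (Ideal.span {x} ⊔ I) ^ m := by
  obtain ⟨a, ha, b, hb, hab⟩ := Submodule.mem_sup.1 (Ideal.sup_pow_succ_le _ _ m hz)
  obtain ⟨y, hy, rfl⟩ := Ideal.mem_span_singleton_mul.1 ha
  have hzy : z - y ∈ I ^ (m + 1) :=
    hx _ _ (by rwa [sub_mul, ← hab, mul_comm, add_sub_cancel_left])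
  have : z - y ∈ (Ideal.span {x} ⊔ I) ^ m :=
    Ideal.pow_le_pow_right (Nat.le_succ m) (Ideal.pow_right_mono le_sup_right _ hzy)
  simpa using add_mem this hy

theorem isQuasiRegularOn_empty (f : Ω → R) : IsQuasiRegularOn f ∅ := by
  intro n p hp _ hpI μ
  rw [supported_empty, Algebra.mem_bot] at hp
  obtain ⟨c, rfl⟩ := hp
  rw [Set.image_empty, Ideal.span_empty] at hpI ⊢
  have hc : c = 0 := by simpa using Ideal.pow_le_self n.succ_ne_zero hpI
  simp [hc]

namespace IsQuasiRegularOn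

variable {f : Ω → R} {V : Set Ω}

theorem mem_pow_of_mul_mem_pow (hV : IsQuasiRegularOn f V) {x : R}
    (hx : ∀ z, z * x ∈ Ideal.span (f '' V) → z ∈ Ideal.span (f '' V)) :
    ∀ m z, z * x ∈ Ideal.span (f '' V) ^ m → z ∈ Ideal.span (f '' V) ^ m := by
  intro m
  induction m with
  | zero => simp
  | succ m ih =>
    intro z hz
    obtain ⟨p, hp, hh, rfl⟩ :=
      exists_eval_eq_of_mem_pow f (ih _ (Ideal.pow_le_pow_right (Nat.le_succ m) hz))
    have hcoeff : ∀ μ, p.coeff μ ∈ Ideal.span (f '' V) := by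
      refine fun μ => hx _ ?_
      rw [mul_comm, ← coeff_C_mul]
      have hxp : C x * p ∈ supported R V :=
        Subalgebra.mul_mem _ (Subalgebra.algebraMap_mem _ x) hp
      refine hV m _ hxp (hh.C_mul x) ?_ μ
      rwa [map_mul, eval_C, mul_comm]
    rw [pow_succ']
    exact eval_mem_mul_pow f hp hh hcoeff

theorem coeff_mem_of_eval_add_mul_mem (hV : IsQuasiRegularOn f V) {γ : Ω}
    (hγ : ∀ z, z * f γ ∈ Ideal.span (f '' V) → z ∈ Ideal.span (f '' V))
    {n : ℕ} {p : MvPolynomial Ω R} (hp : p ∈ supported R V) (hh : p.IsHomogeneous n) {w : R}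
    (hw : eval f p + f γ * w ∈ Ideal.span (f '' insert γ V) ^ (n + 1)) (μ : Ω →₀ ℕ) :
    p.coeff μ ∈ Ideal.span (f '' insert γ V) := by
  rw [Set.image_insert_eq, Ideal.span_insert] at hw ⊢
  set J := Ideal.span (f '' V)
  obtain ⟨a, ha, b, hb, hab⟩ := Submodule.mem_sup.1 (Ideal.sup_pow_succ_le _ _ n hw)
  obtain ⟨y, -, rfl⟩ := Ideal.mem_span_singleton_mul.1 ha
  have hyw : (y - w) * f γ ∈ J ^ n := by
    have : (y - w) * f γ = eval f p - b := by linear_combination hab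
    rw [this]
    exact sub_mem (eval_mem_pow f hp hh) (Ideal.pow_le_pow_right (Nat.le_succ n) hb)
  obtain ⟨q, hq, hhq, hqyw⟩ :=
    exists_eval_eq_of_mem_pow f (hV.mem_pow_of_mul_mem_pow hγ n _ hyw)
  have hpq := hV n (p - C (f γ) * q)
    (sub_mem hp (Subalgebra.mul_mem _ (Subalgebra.algebraMap_mem _ _) hq)) (hh.sub (hhq.C_mul _))
    (by rw [map_sub, map_mul, eval_C, hqyw]; convert hb using 1; linear_combination -hab) μ
  rw [coeff_sub, coeff_C_mul] at hpq
  have hfγ : f γ ∈ Ideal.span {f γ} ⊔ J :=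
    Ideal.mem_sup_left (Ideal.mem_span_singleton_self _)
  simpa using add_mem (Ideal.mem_sup_right hpq) (Ideal.mul_mem_right (q.coeff μ) _ hfγ)

theorem insert (hV : IsQuasiRegularOn f V) {γ : Ω}
    (hγ : ∀ z, z * f γ ∈ Ideal.span (f '' V) → z ∈ Ideal.span (f '' V)) :
    IsQuasiRegularOn f (insert γ V) := by
  intro n
  induction n with
  | zero => exact fun p _ hh hp => coeff_mem_of_isHomogeneous_zero f hh (by simpa using hp)
  | succ n ih =>
    intro p hp hh hpI
    obtain ⟨p₀, q, hp₀, hh₀, hq, hhq, rfl⟩ := exists_eq_add_X_mul hp hh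
    rw [map_add, map_mul, eval_X] at hpI
    have hp₀I := hV.coeff_mem_of_eval_add_mul_mem hγ hp₀ hh₀ hpI
    have hqI : ∀ μ, q.coeff μ ∈ Ideal.span (f '' Insert.insert γ V) := by
      have hp₀I' : eval f p₀ ∈ Ideal.span (f '' Insert.insert γ V) ^ (n + 1 + 1) := by
        rw [pow_succ']
        exact eval_mem_mul_pow f (supported_mono (Set.subset_insert γ V) hp₀) hh₀ hp₀I
      refine ih q hq hhq ?_
      rw [Set.image_insert_eq, Ideal.span_insert] at hpI hp₀I' ⊢
      refine Ideal.mem_pow_of_mul_mem_sup_pow (hV.mem_pow_of_mul_mem_pow hγ) ?_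
      have : eval f q * f γ = (eval f p₀ + f γ * eval f q) - eval f p₀ := by ring
      rw [this]
      exact sub_mem hpI hp₀I'
    classical
    intro μ
    rw [coeff_add, coeff_X_mul']
    split_ifs
    exacts [add_mem (hp₀I μ) (hqI _), by simpa using hp₀I μ]

theorem of_forall_finset
    (h : ∀ F : Finset Ω, ↑F ⊆ V → ∃ W ⊆ V, ↑F ⊆ W ∧ IsQuasiRegularOn f W) :
    IsQuasiRegularOn f V := by
  classical
  intro n p hp hh hpI μ
  obtain ⟨q, hq, hhq, hqp⟩ := exists_eval_eq_of_mem_pow f hpI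
  rw [mem_supported] at hp hq
  obtain ⟨W, hWV, hFW, hW⟩ := h (p.vars ∪ q.vars) (by simpa using ⟨hp, hq⟩)
  rw [Finset.coe_union, Set.union_subset_iff] at hFW
  have hpW : eval f p ∈ Ideal.span (f '' W) ^ (n + 1) :=
    hqp ▸ eval_mem_pow f (mem_supported.2 hFW.2) hhq
  exact Ideal.span_mono (Set.image_mono hWV) (hW n p (mem_supported.2 hFW.1) hh hpW μ)

theorem of_isLowerSet [LinearOrder Ω] (hV : IsLowerSet V)
    (h : ∀ β ∈ V, IsQuasiRegularOn f (Set.Iic β)) : IsQuasiRegularOn f V := by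
  refine of_forall_finset fun F hF => ?_
  rcases F.eq_empty_or_nonempty with rfl | hne
  · exact ⟨∅, Set.empty_subset V, by simp, isQuasiRegularOn_empty f⟩
  · have hmax : F.max' hne ∈ V := hF (F.max'_mem hne)
    exact ⟨_, hV.Iic_subset hmax, fun β hβ => F.le_max' β hβ, h _ hmax⟩

end IsQuasiRegularOn

theorem isQuasiRegularOn_univ [LinearOrder Ω] [WellFoundedLT Ω] (f : Ω → R)
    (hreg : ∀ α : Ω, ∀ z : R, z * f α ∈ Ideal.span (f '' Set.Iio α) →
      z ∈ Ideal.span (f '' Set.Iio α)) :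
    IsQuasiRegularOn f Set.univ := by
  have hIic (β : Ω) (hβ : IsQuasiRegularOn f (Set.Iio β)) : IsQuasiRegularOn f (Set.Iic β) :=
    Set.Iio_insert (a := β) ▸ hβ.insert (hreg β)
  have hIio (β : Ω) : IsQuasiRegularOn f (Set.Iio β) := by
    induction β using WellFoundedLT.induction with
    | _ β ih => exact .of_isLowerSet (isLowerSet_Iio β) fun α hα => hIic α (ih α hα)
  exact .of_isLowerSet isLowerSet_univ fun β _ => hIic β (hIio β)

-- Indexed by values in `R` rather than by monomials, so that the basis lives in `R`'s universe.
def monomialValues (f : Ω → R) (n : ℕ) : Set R :=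
  (fun μ : Ω →₀ ℕ => eval f (monomial μ 1)) '' {μ | μ.degree = n}

theorem monomialValues_subset_pow (f : Ω → R) (n : ℕ) :
    monomialValues f n ⊆ (Ideal.span (Set.range f) ^ n : Ideal R) := by
  rintro _ ⟨μ, hμ, rfl⟩
  rw [← Set.image_univ]
  exact eval_mem_pow f (by simp) (isHomogeneous_monomial 1 hμ)

theorem span_range_pow_le_span_monomialValues (f : Ω → R) (n : ℕ) :
    Ideal.span (Set.range f) ^ n ≤ Ideal.span (monomialValues f n) := by
  intro x hx
  rw [← Set.image_univ] at hx
  obtain ⟨p, -, hh, rfl⟩ := exists_eval_eq_of_mem_pow f hx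
  rw [p.as_sum, map_sum]
  refine Ideal.sum_mem _ fun μ hμ => ?_
  rw [eval_monomial]
  refine Ideal.mul_mem_left _ _ (Ideal.subset_span ⟨μ, ?_, by simp [eval_monomial]⟩)
  exact isHomogeneous_iff_forall_coeff.1 hh μ (mem_support_iff.1 hμ)

theorem IsQuasiRegularOn.coeff_mem_of_sum_mul_mem {f : Ω → R}
    (hf : IsQuasiRegularOn f Set.univ) {n : ℕ} (s : Finset (monomialValues f n))
    (c : monomialValues f n → R)
    (hs : ∑ i ∈ s, c i * i ∈ Ideal.span (Set.range f) ^ (n + 1)) :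
    ∀ i ∈ s, c i ∈ Ideal.span (Set.range f) := by
  classical
  choose μ hμ hμf using fun i : monomialValues f n => i.2
  have hμinj : μ.Injective := fun i j hij => Subtype.ext (by rw [← hμf i, ← hμf j, hij])
  let p := ∑ i ∈ s, monomial (μ i) (c i)
  have hp : p.IsHomogeneous n := IsHomogeneous.sum _ _ _ fun i _ => isHomogeneous_monomial _ (hμ i)
  have hpI : eval f p ∈ Ideal.span (f '' Set.univ) ^ (n + 1) := by
    rw [Set.image_univ]
    convert hs using 2
    rw [map_sum]
    refine Finset.sum_congr rfl fun i _ => ?_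
    simp [← hμf i, eval_monomial]
  intro i hi
  have := hf n p (by simp) hp hpI (μ i)
  rwa [coeff_sum, Finset.sum_eq_single_of_mem i hi, coeff_monomial, if_pos rfl,
    Set.image_univ] at this
  intro j _ hji
  rw [coeff_monomial, if_neg (hμinj.ne hji)]

end QuasiRegular

/-- Corollary 1.18: if `(f_α)` is a regular sequence generating the ideal `I`, then
`Iⁿ/Iⁿ⁺¹` is a free module over `R/I` for every `n`; i.e. there is a family of elements
of `Iⁿ` whose images in `Iⁿ/Iⁿ⁺¹` form a basis over `R/I` (they generate `Iⁿ` modulo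
`Iⁿ⁺¹`, and any `R`-linear combination lying in `Iⁿ⁺¹` has all coefficients in `I`). -/
theorem pow_quotient_free {R : Type u} [CommRing R] {Ω : Type*}
    (lt : Ω → Ω → Prop) (hwo : IsWellOrder Ω lt) (f : Ω → R)
    (hreg : IsRegularSeq lt f) (n : ℕ) :
    ∃ (ι : Type u) (v : ι → R),
      (∀ i, v i ∈ (Ideal.span (Set.range f)) ^ n) ∧
      (∀ x ∈ (Ideal.span (Set.range f)) ^ n, ∃ (s : Finset ι) (c : ι → R),
        x - ∑ i ∈ s, c i * v i ∈ (Ideal.span (Set.range f)) ^ (n + 1)) ∧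
      (∀ (s : Finset ι) (c : ι → R),
        (∑ i ∈ s, c i * v i) ∈ (Ideal.span (Set.range f)) ^ (n + 1) →
          ∀ i ∈ s, c i ∈ Ideal.span (Set.range f)) := by
  let _ : LinearOrder Ω := IsWellOrder.linearOrder lt
  have : WellFoundedLT Ω := ⟨hwo.wf⟩
  have hf : IsQuasiRegularOn f Set.univ := isQuasiRegularOn_univ f hreg.2
  refine ⟨monomialValues f n, (↑), fun i => monomialValues_subset_pow f n i.2, fun x hx => ?_,
    hf.coeff_mem_of_sum_mul_mem⟩
  have hx' := span_range_pow_le_span_monomialValues f n hx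
  rw [← Subtype.range_coe (s := monomialValues f n)] at hx'
  obtain ⟨c, rfl⟩ := Finsupp.mem_span_range_iff_exists_finsupp.1 hx'
  exact ⟨c.support, c, by simp [Finsupp.sum]⟩

end
end

section
/- Let R = ⊕_{n≥0} R_n be a non-negatively graded commutative ring and let f, g ∈ R be homogeneous elements of positive degree. If (f, g) is a regular sequence on R (i.e. R/(f,g)R ≠ 0, f is a non-zerodivisor on R, and g is a non-zerodivisor on R/(f)R), then (g, f) is also a regular sequence on R. -/
noncomputable section

/-- Lemma 1.19 (key step): in a non-negatively graded commutative ring, if `(f, g)` is a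
regular sequence of homogeneous elements of positive degree, then so is `(g, f)`. -/
theorem swap_regular_pair {R : Type*} [CommRing R]
    (𝒜 : ℕ → AddSubmonoid R) [GradedRing 𝒜]
    (f g : R) (hf : ∃ n, 0 < n ∧ f ∈ 𝒜 n) (hg : ∃ n, 0 < n ∧ g ∈ 𝒜 n)
    (hne : Ideal.span {f, g} ≠ ⊤)
    (hfreg : ∀ h : R, h * f = 0 → h = 0)
    (hgreg : ∀ h : R, h * g ∈ Ideal.span {f} → h ∈ Ideal.span {f}) :
    Ideal.span {g, f} ≠ ⊤ ∧ (∀ h : R, h * g = 0 → h = 0) ∧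
      ∀ h : R, h * f ∈ Ideal.span {g} → h ∈ Ideal.span {g} := by
  obtain ⟨m, hm, hfm⟩ := hf
  refine ⟨by rwa [Set.pair_comm], ?_, ?_⟩
  · intro h hhg
    -- first: ∀ n, ∃ a, a * g = 0 ∧ h = f ^ n * a
    have key : ∀ n : ℕ, ∃ a : R, a * g = 0 ∧ h = f ^ n * a := by
      intro n
      induction n with
      | zero => exact ⟨h, hhg, by ring⟩
      | succ n ih =>
        obtain ⟨a, hag, hha⟩ := ih
        have : a * g ∈ Ideal.span {f} := by rw [hag]; exact Ideal.zero_mem _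
        have haf : a ∈ Ideal.span {f} := hgreg a this
        obtain ⟨b, hb⟩ := Ideal.mem_span_singleton'.mp haf
        have hbg : b * g = 0 := by
          apply hfreg
          have : b * f * g = 0 := by rw [hb]; exact hag
          linear_combination this
        exact ⟨b, hbg, by rw [hha, ← hb]; ring⟩
    -- now h's components all vanish
    have comp0 : ∀ k : ℕ, (DirectSum.decompose 𝒜 h k : R) = 0 := by
      intro k
      obtain ⟨a, -, hha⟩ := key (k + 1)
      have hfpow : f ^ (k + 1) ∈ 𝒜 ((k + 1) * m) := SetLike.pow_mem_graded _ hfm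
      have hlt : ¬ (k + 1) * m ≤ k := by
        intro hle
        have : k + 1 ≤ (k + 1) * m := Nat.le_mul_of_pos_right _ hm
        omega
      rw [hha]
      exact DirectSum.coe_decompose_mul_of_left_mem_of_not_le 𝒜 hfpow hlt
    apply (DirectSum.decompose 𝒜).injective
    refine DFinsupp.ext fun k => ?_
    have := comp0 k
    simp only [DirectSum.decompose_zero, DirectSum.zero_apply]
    exact Subtype.ext (by simpa using this)
  · intro h hh
    obtain ⟨c, hc⟩ := Ideal.mem_span_singleton'.mp hh
    have hcf : c ∈ Ideal.span {f} := by
      apply hgreg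
      rw [Ideal.mem_span_singleton']
      exact ⟨h, hc.symm⟩
    obtain ⟨d, hd⟩ := Ideal.mem_span_singleton'.mp hcf
    have : (h - d * g) * f = 0 := by
      have : c * g = h * f := hc
      rw [← hd] at this
      linear_combination -this
    have := hfreg _ this
    rw [Ideal.mem_span_singleton']
    exact ⟨d, (sub_eq_zero.mp this).symm⟩

end
end

section
/- Let R = ⊕_{n≥0} R_n be a non-negatively graded commutative ring, and let (f_α)_{α∈Ω} be a family of homogeneous elements of positive degree in R indexed by a well-ordered set Ω. If (f_α)_{α∈Ω} is a regular sequence on R, then it satisfies the FR-condition: every finite subfamily f_{α₁},…,f_{α_r} with α₁ < ⋯ < α_r is a regular sequence in this order. -/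
/-!
By well-founded induction on `γ`, `f γ` is a non-zerodivisor modulo `(f β : β ∈ U)` for every
finite `U` below `γ`. The induction hypothesis makes every finite family below `γ` regular in
increasing order, and such a family stays regular in its last place after any reordering,
since `x, y` regular modulo `I` implies `x` regular modulo `I + (y)`.
Now let `h` be homogeneous with `h * f γ ∈ (f U)`. Regularity of the whole family puts `h` in
`(f V)` for a finite `V ⊇ U` below `γ`. Remove the elements `δ ∈ V \ U` one at a time: write
`h = u + b * f δ` with `b` homogeneous of degree `deg h - deg (f δ) < deg h`; then
`b * f γ * f δ ∈ (f (V \ {δ}))` forces `b * f γ ∈ (f (V \ {δ}))`, so `b ∈ (f (V \ {δ}))` by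
induction on the degree.
-/

noncomputable section

open DirectSum

section

variable {R : Type*} [CommRing R]

def IsRegularModulo (I : Ideal R) (x : R) : Prop :=
  ∀ h : R, h * x ∈ I → h ∈ I

theorem IsRegularModulo.swap {I : Ideal R} {x y : R} (hx : IsRegularModulo I x)
    (hy : IsRegularModulo (Ideal.span {x} ⊔ I) y) :
    IsRegularModulo (Ideal.span {y} ⊔ I) x := by
  intro h hh
  obtain ⟨c, i, hi, hci⟩ := Ideal.mem_span_singleton_sup.mp hh
  have hcy : c * y ∈ Ideal.span {x} ⊔ I :=
    Ideal.mem_span_singleton_sup.mpr ⟨h, -i, I.neg_mem hi, by linear_combination -hci⟩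
  obtain ⟨b, j, hj, hbj⟩ := Ideal.mem_span_singleton_sup.mp (hy c hcy)
  have hhb : (h - b * y) * x ∈ I := by
    have : (h - b * y) * x = i + j * y := by linear_combination -hci - y * hbj
    rw [this]
    exact I.add_mem hi (I.mul_mem_right y hj)
  exact Ideal.mem_span_singleton_sup.mpr ⟨b, h - b * y, hx _ hhb, by ring⟩

theorem isRegularModulo_span_image_erase {Ω : Type*} [LinearOrder Ω] (f : Ω → R)
    (S : Finset Ω)
    (hS : ∀ δ ∈ S, IsRegularModulo (Ideal.span (f '' ↑(S.filter (· < δ)))) (f δ)) :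
    ∀ δ ∈ S, IsRegularModulo (Ideal.span (f '' ↑(S.erase δ))) (f δ) := by
  induction S using Finset.induction_on_max with
  | empty => simp
  | insert a s has ih =>
    have has' : a ∉ s := fun h => lt_irrefl a (has a h)
    have hfilter : ∀ δ ∈ s, (insert a s).filter (· < δ) = s.filter (· < δ) := fun δ hδ => by
      rw [Finset.filter_insert, if_neg (not_lt.mpr (has δ hδ).le)]
    have hfilter_a : (insert a s).filter (· < a) = s := by
      rw [Finset.filter_insert, if_neg (lt_irrefl a), Finset.filter_true_of_mem has]
    intro δ hδ
    rcases Finset.mem_insert.mp hδ with rfl | hδs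
    · rw [Finset.erase_insert has', ← hfilter_a]
      exact hS δ hδ
    · have hδ_reg : IsRegularModulo (Ideal.span (f '' ↑(s.erase δ))) (f δ) :=
        ih (fun β hβ => hfilter β hβ ▸ hS β (Finset.mem_insert_of_mem hβ)) δ hδs
      have ha_reg : IsRegularModulo (Ideal.span {f δ} ⊔ Ideal.span (f '' ↑(s.erase δ))) (f a) := by
        rw [← Ideal.span_insert, ← Set.image_insert_eq, ← Finset.coe_insert,
          Finset.insert_erase hδs, ← hfilter_a]
        exact hS a (Finset.mem_insert_self a s)
      rw [Finset.erase_insert_of_ne (has δ hδs).ne', Finset.coe_insert, Set.image_insert_eq,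
        Ideal.span_insert]
      exact hδ_reg.swap ha_reg

theorem exists_finset_subset_of_mem_span_image {Ω : Type*} {f : Ω → R} {s : Set Ω} {h : R}
    (hh : h ∈ Ideal.span (f '' s)) : ∃ T : Finset Ω, ↑T ⊆ s ∧ h ∈ Ideal.span (f '' ↑T) := by
  classical
  obtain ⟨T', hT's, hT'⟩ := Submodule.mem_span_finite_of_mem_span hh
  obtain ⟨T, hTs, rfl⟩ := Finset.subset_set_image_iff.mp hT's
  exact ⟨T, hTs, by rwa [Finset.coe_image] at hT'⟩

section Graded

variable (𝒜 : ℕ → AddSubmonoid R) [GradedRing 𝒜] {I : Ideal R}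

theorem isRegularModulo_of_homogeneous (hI : I.IsHomogeneous 𝒜) {y : R} {e : ℕ}
    (hy : y ∈ 𝒜 e) (H : ∀ d, ∀ h ∈ 𝒜 d, h * y ∈ I → h ∈ I) : IsRegularModulo I y := by
  classical
  intro h hh
  rw [← DirectSum.sum_support_decompose 𝒜 h]
  refine Ideal.sum_mem _ fun d _ => H d _ (SetLike.coe_mem _) ?_
  have := hI (d + e) hh
  rwa [coe_decompose_mul_of_right_mem_of_le 𝒜 hy (Nat.le_add_left e d), Nat.add_sub_cancel]
    at this

theorem mem_of_mem_span_singleton_sup_of_lt (hI : I.IsHomogeneous 𝒜) {x h : R} {d e : ℕ}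
    (hx : x ∈ 𝒜 e) (hh : h ∈ 𝒜 d) (hde : d < e) (hmem : h ∈ Ideal.span {x} ⊔ I) : h ∈ I := by
  obtain ⟨c, i, hi, rfl⟩ := Ideal.mem_span_singleton_sup.mp hmem
  rw [← decompose_of_mem_same 𝒜 hh, decompose_add, DirectSum.add_apply, AddSubmonoid.coe_add,
    coe_decompose_mul_of_right_mem_of_not_le 𝒜 hx (by omega), zero_add]
  exact hI d hi

theorem exists_sub_mul_mem_of_mem_span_singleton_sup (hI : I.IsHomogeneous 𝒜) {x h : R}
    {d e : ℕ} (hx : x ∈ 𝒜 e) (hh : h ∈ 𝒜 (d + e)) (hmem : h ∈ Ideal.span {x} ⊔ I) :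
    ∃ b ∈ 𝒜 d, h - b * x ∈ I := by
  obtain ⟨c, i, hi, rfl⟩ := Ideal.mem_span_singleton_sup.mp hmem
  refine ⟨decompose 𝒜 c d, SetLike.coe_mem _, ?_⟩
  nth_rewrite 1 [← decompose_of_mem_same 𝒜 hh]
  rw [decompose_add, DirectSum.add_apply, AddSubmonoid.coe_add,
    coe_decompose_mul_of_right_mem_of_le 𝒜 hx (Nat.le_add_left e d), Nat.add_sub_cancel,
    add_sub_cancel_left]
  exact hI (d + e) hi

theorem mem_of_mem_span_singleton_sup_of_mul_mem (hI : I.IsHomogeneous 𝒜) {x y h : R}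
    {d e : ℕ} (hx : x ∈ 𝒜 e) (he : 0 < e) (hx_reg : IsRegularModulo I x)
    (hy : ∀ d' < d, ∀ b ∈ 𝒜 d', b * y ∈ I → b ∈ I)
    (hh : h ∈ 𝒜 d) (hmem : h ∈ Ideal.span {x} ⊔ I) (hhy : h * y ∈ I) : h ∈ I := by
  rcases lt_or_ge d e with hde | hed
  · exact mem_of_mem_span_singleton_sup_of_lt 𝒜 hI hx hh hde hmem
  obtain ⟨d', rfl⟩ := Nat.exists_eq_add_of_le' hed
  obtain ⟨b, hb, hbx⟩ := exists_sub_mul_mem_of_mem_span_singleton_sup 𝒜 hI hx hh hmem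
  have hbyx : b * y * x ∈ I := by
    have : b * y * x = h * y - (h - b * x) * y := by ring
    rw [this]
    exact I.sub_mem hhy (I.mul_mem_right y hbx)
  have hb_mem : b ∈ I := hy d' (by omega) b hb (hx_reg _ hbyx)
  simpa using I.add_mem hbx (I.mul_mem_right x hb_mem)

theorem isHomogeneous_span_image {Ω : Type*} {f : Ω → R}
    (hf : ∀ α, SetLike.IsHomogeneousElem 𝒜 (f α)) (S : Set Ω) :
    (Ideal.span (f '' S)).IsHomogeneous 𝒜 :=
  Ideal.homogeneous_span 𝒜 _ <| by
    rintro _ ⟨β, -, rfl⟩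
    exact hf β

theorem mem_span_image_of_mem_span_image_union {Ω : Type*} [DecidableEq Ω] {f : Ω → R}
    (hhom : ∀ α, ∃ n, 0 < n ∧ f α ∈ 𝒜 n) {Λ : Set Ω}
    (hperm : ∀ V : Finset Ω, ↑V ⊆ Λ → ∀ δ ∈ V,
      IsRegularModulo (Ideal.span (f '' ↑(V.erase δ))) (f δ))
    {y h : R} {d : ℕ}
    (hy : ∀ d' < d, ∀ V : Finset Ω, ↑V ⊆ Λ → ∀ b ∈ 𝒜 d',
      b * y ∈ Ideal.span (f '' ↑V) → b ∈ Ideal.span (f '' ↑V))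
    (hh : h ∈ 𝒜 d) {U : Finset Ω} (hU : ↑U ⊆ Λ) (hhy : h * y ∈ Ideal.span (f '' ↑U))
    (T : Finset Ω) (hT : ↑T ⊆ Λ) (hmem : h ∈ Ideal.span (f '' ↑(T ∪ U))) :
    h ∈ Ideal.span (f '' ↑U) := by
  induction T using Finset.induction_on with
  | empty => simpa using hmem
  | insert δ T _ ihT =>
    rw [Finset.coe_insert, Set.insert_subset_iff] at hT
    refine ihT hT.2 ?_
    rw [Finset.insert_union] at hmem
    by_cases hδ : δ ∈ T ∪ U
    · rwa [Finset.insert_eq_of_mem hδ] at hmem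
    have hTU : ↑(T ∪ U) ⊆ Λ := by
      rw [Finset.coe_union]
      exact Set.union_subset hT.2 hU
    have hV : ↑(insert δ (T ∪ U)) ⊆ Λ := by
      rw [Finset.coe_insert]
      exact Set.insert_subset hT.1 hTU
    obtain ⟨n, hn, hfδ⟩ := hhom δ
    refine mem_of_mem_span_singleton_sup_of_mul_mem 𝒜
      (isHomogeneous_span_image 𝒜 (fun α => (hhom α).imp fun _ => And.right) _) hfδ hn ?_
      (fun d' hd' => hy d' hd' _ hTU) hh ?_
      (Ideal.span_mono (Set.image_mono (by simp)) hhy)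
    · simpa [Finset.erase_insert hδ] using hperm _ hV δ (Finset.mem_insert_self δ _)
    · rwa [Finset.coe_insert, Set.image_insert_eq, Ideal.span_insert] at hmem

theorem isRegularModulo_span_image_of_subset_Iio {Ω : Type*} [LinearOrder Ω] [WellFoundedLT Ω]
    {f : Ω → R}
    (hhom : ∀ α, ∃ n, 0 < n ∧ f α ∈ 𝒜 n)
    (hreg : ∀ α, IsRegularModulo (Ideal.span (f '' Set.Iio α)) (f α))
    (γ : Ω) (U : Finset Ω) (hU : ↑U ⊆ Set.Iio γ) :
    IsRegularModulo (Ideal.span (f '' ↑U)) (f γ) := by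
  induction γ using WellFoundedLT.induction generalizing U with
  | _ γ IH =>
  have hperm (V : Finset Ω) (hV : ↑V ⊆ Set.Iio γ) :
      ∀ δ ∈ V, IsRegularModulo (Ideal.span (f '' ↑(V.erase δ))) (f δ) :=
    isRegularModulo_span_image_erase f V fun δ hδ =>
      IH δ (hV hδ) _ fun β hβ => (Finset.mem_filter.mp hβ).2
  obtain ⟨e, -, hfγ⟩ := hhom γ
  suffices ∀ d, ∀ U : Finset Ω, ↑U ⊆ Set.Iio γ → ∀ h ∈ 𝒜 d,
      h * f γ ∈ Ideal.span (f '' ↑U) → h ∈ Ideal.span (f '' ↑U) from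
    isRegularModulo_of_homogeneous 𝒜
      (isHomogeneous_span_image 𝒜 (fun α => (hhom α).imp fun _ => And.right) _) hfγ
      fun d h hh => this d U hU h hh
  intro d
  induction d using Nat.strong_induction_on with
  | _ d IHd =>
  intro U hU h hh hhγ
  obtain ⟨T, hTγ, hT⟩ := exists_finset_subset_of_mem_span_image
    (hreg γ h (Ideal.span_mono (Set.image_mono hU) hhγ))
  exact mem_span_image_of_mem_span_image_union 𝒜 hhom hperm IHd hh hU hhγ T hTγ
    (Ideal.span_mono (Set.image_mono (by simp)) hT)

end Graded

end

/-- Proposition 1.20: in a non-negatively graded commutative ring, a regular sequence of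
homogeneous elements of positive degree satisfies the FR-condition. -/
theorem satisfiesFR_of_isRegularSeq {R : Type*} [CommRing R]
    (𝒜 : ℕ → AddSubmonoid R) [GradedRing 𝒜]
    {Ω : Type*} (lt : Ω → Ω → Prop) (hwo : IsWellOrder Ω lt)
    (f : Ω → R) (hhom : ∀ α, ∃ n, 0 < n ∧ f α ∈ 𝒜 n)
    (hreg : IsRegularSeq lt f) : SatisfiesFR lt f := by
  classical
  -- `<` of this order is `lt` itself, so `hreg.2` reads as regularity modulo `Set.Iio α`.
  let : LinearOrder Ω := linearOrderOfSTO lt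
  have : WellFoundedLT Ω := hwo.toIsWellFounded
  intro n α hα
  refine ⟨fun htop => hreg.1 (top_unique ?_), fun i => ?_⟩
  · exact htop ▸ Ideal.span_mono (Set.range_comp_subset_range α f)
  have hU : (fun j => f (α j)) '' {j | j < i} = f '' ↑((Finset.univ.filter (· < i)).image α) := by
    ext
    simp
  show IsRegularModulo (Ideal.span ((fun j => f (α j)) '' {j | j < i})) _
  rw [hU]
  refine isRegularModulo_span_image_of_subset_Iio 𝒜 hhom hreg.2 (α i) _ ?_
  simp only [Finset.coe_image, Finset.coe_filter, Finset.mem_univ, true_and]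
  rintro _ ⟨j, hj, rfl⟩
  exact hα j i hj
end
end

section
/- Let R = ⊕_{n≥0} R_n be a non-negatively graded commutative ring, and let (f_α)_{α∈Ω} be a family of homogeneous elements of positive degree indexed by a well-ordered set Ω. Then (f_α)_{α∈Ω} is a regular sequence on R if and only if it satisfies the FR-condition. In particular, if σ : Ω' → Ω is a bijection from another well-ordered set Ω' and (f_α)_{α∈Ω} is a regular sequence on R, then (f_{σ(α')})_{α'∈Ω'} is again a regular sequence on R; i.e. any permutation of a homogeneous regular sequence is again a regular sequence. -/
noncomputable section

open DirectSum

/-- The key graded lemma: if `(f_α)` is a regular sequence of homogeneous elements of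
positive degree over a well-order, then `f α` is a non-zerodivisor modulo the ideal
generated by ANY finite subfamily not containing `α` (in particular, order plays no role
for finite subfamilies). -/
theorem main_reg_aux {R : Type*} [CommRing R] (𝒜 : ℕ → AddSubmonoid R) [GradedRing 𝒜]
    {Ω : Type*} (lt : Ω → Ω → Prop) (hwo : IsWellOrder Ω lt) (f : Ω → R)
    (hhom : ∀ α, ∃ n, 0 < n ∧ f α ∈ 𝒜 n)
    (hreg : ∀ α : Ω, ∀ h : R, h * f α ∈ Ideal.span (f '' {β | lt β α}) →
      h ∈ Ideal.span (f '' {β | lt β α})) :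
    ∀ (α : Ω) (T : Finset Ω), α ∉ T →
      ∀ h : R, h * f α ∈ Ideal.span (f '' ↑T) → h ∈ Ideal.span (f '' ↑T) := by
  classical
  haveI := hwo
  letI : LinearOrder Ω := IsWellOrder.linearOrder lt
  have hwf : WellFounded lt := hwo.toIsWellFounded.wf
  have hIhom : ∀ T : Finset Ω, (Ideal.span (f '' ↑T)).IsHomogeneous 𝒜 := by
    intro T
    refine Ideal.homogeneous_span 𝒜 _ ?_
    rintro x ⟨β, -, rfl⟩
    obtain ⟨n, -, hn⟩ := hhom β
    exact ⟨n, hn⟩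
  have key : ∀ μ : Ω, ∀ α : Ω, ∀ T : Finset Ω, α ∉ T →
      (∀ β ∈ insert α T, lt β μ ∨ β = μ) →
      ∀ h : R, h * f α ∈ Ideal.span (f '' ↑T) → h ∈ Ideal.span (f '' ↑T) := by
    intro μ
    induction μ using WellFounded.induction hwf with
    | _ μ IH =>
    -- the graded core: regularity of `f μ` modulo any finite family below `μ`
    have hS : ∀ n : ℕ, ∀ T : Finset Ω, (∀ β ∈ T, lt β μ) →
        ∀ h : R, h ∈ 𝒜 n → h * f μ ∈ Ideal.span (f '' ↑T) →
        h ∈ Ideal.span (f '' ↑T) := by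
      intro n
      induction n using Nat.strong_induction_on with
      | _ n IHn =>
      intro T hT h hmem hmul
      -- claim: membership in a larger finitely generated homogeneous ideal can be reduced
      have claim : ∀ E : Finset Ω, ↑E ⊆ {β | lt β μ} → ∀ h' : R, h' ∈ 𝒜 n →
          h' * f μ ∈ Ideal.span (f '' ↑T) → h' ∈ Ideal.span (f '' ↑(T ∪ E)) →
          h' ∈ Ideal.span (f '' ↑T) := by
        intro E
        induction E using Finset.induction_on with
        | empty =>
          intro _ h' _ _ hmem2
          rwa [Finset.union_empty] at hmem2
        | @insert γ E hγE IHE =>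
          intro hsub h' hmem' hmul' hmem2
          have hEsub : ↑E ⊆ {β | lt β μ} := by
            intro β hβ
            exact hsub (by simpa using Or.inr (by exact hβ))
          by_cases hγT : γ ∈ T
          · rw [Finset.union_insert, Finset.insert_eq_self.mpr
              (Finset.mem_union_left E hγT)] at hmem2
            exact IHE hEsub h' hmem' hmul' hmem2
          · have hγTE : γ ∉ T ∪ E := by simp [hγT, hγE]
            have hγlt : lt γ μ := hsub (by simp)
            have hTElt : ∀ β ∈ T ∪ E, lt β μ := by
              intro β hβ
              rcases Finset.mem_union.mp hβ with hb | hb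
              · exact hT β hb
              · exact hEsub hb
            set J := Ideal.span (f '' ↑(T ∪ E)) with hJdef
            -- regularity of `f γ` modulo J, from the well-founded IH
            have hne : (insert γ (T ∪ E)).Nonempty := ⟨γ, Finset.mem_insert_self _ _⟩
            set ν := (insert γ (T ∪ E)).max' hne with hνdef
            have hνmem : ν ∈ insert γ (T ∪ E) := Finset.max'_mem _ hne
            have hνlt : lt ν μ := by
              rcases Finset.mem_insert.mp hνmem with hb | hb
              · exact hb ▸ hγlt
              · exact hTElt _ hb
            have hbound : ∀ β ∈ insert γ (T ∪ E), lt β ν ∨ β = ν := by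
              intro β hβ
              rcases lt_or_eq_of_le (Finset.le_max' _ β hβ) with hb | hb
              · exact Or.inl hb
              · exact Or.inr hb
            have hγreg : ∀ g : R, g * f γ ∈ J → g ∈ J := IH ν hνlt γ (T ∪ E) hγTE hbound
            -- decompose h'
            have hmem2' : h' ∈ Ideal.span {f γ} ⊔ J := by
              rw [Finset.union_insert, Finset.coe_insert, Set.image_insert_eq,
                Ideal.span_insert] at hmem2
              exact hmem2
            obtain ⟨z, hz, u, hu, hzu⟩ := Submodule.mem_sup.mp hmem2'
            obtain ⟨c, hc⟩ := Ideal.mem_span_singleton'.mp hz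
            obtain ⟨d, hd0, hdγ⟩ := hhom γ
            have hJhom : J.IsHomogeneous 𝒜 := hIhom (T ∪ E)
            have hu_n : (decompose 𝒜 u n : R) ∈ J := hJhom n hu
            have e2 : h' = (decompose 𝒜 z n : R) + (decompose 𝒜 u n : R) := by
              conv_lhs => rw [← DirectSum.decompose_of_mem_same 𝒜 hmem', ← hzu]
              rw [DirectSum.decompose_add]
              simp
            have hh'J : h' * f μ ∈ J :=
              Ideal.span_mono (Set.image_mono (by
                intro β hβ; exact Finset.mem_coe.mpr (Finset.mem_union_left E
                  (Finset.mem_coe.mp hβ)))) hmul'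
            by_cases hdn : d ≤ n
            · set c' : R := (decompose 𝒜 c (n - d) : R) with hc'def
              have e3 : (decompose 𝒜 z n : R) = c' * f γ := by
                rw [← hc, DirectSum.coe_decompose_mul_of_right_mem_of_le 𝒜 hdγ hdn]
              have hdecomp : h' = c' * f γ + (decompose 𝒜 u n : R) := by rw [e2, e3]
              have hkey : (c' * f μ) * f γ ∈ J := by
                have e4 : (c' * f μ) * f γ = h' * f μ - (decompose 𝒜 u n : R) * f μ := by
                  rw [hdecomp]; ring
                rw [e4]
                exact Submodule.sub_mem _ hh'J (Ideal.mul_mem_right _ _ hu_n)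
              have hc'J : c' * f μ ∈ J := hγreg _ hkey
              have hc'in : c' ∈ J := by
                have hltn : n - d < n := by omega
                exact IHn (n - d) hltn (T ∪ E) hTElt c' (SetLike.coe_mem _) hc'J
              have h'J : h' ∈ J := by
                rw [hdecomp]
                exact Submodule.add_mem _ (Ideal.mul_mem_right _ _ hc'in) hu_n
              exact IHE hEsub h' hmem' hmul' h'J
            · have e3 : (decompose 𝒜 z n : R) = 0 := by
                rw [← hc]
                exact DirectSum.coe_decompose_mul_of_right_mem_of_not_le 𝒜 hdγ hdn
              have h'J : h' ∈ J := by
                rw [e2, e3, zero_add]; exact hu_n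
              exact IHE hEsub h' hmem' hmul' h'J
      -- use global regularity to land in a finitely generated ideal
      have h1 : h * f μ ∈ Ideal.span (f '' {β | lt β μ}) :=
        Ideal.span_mono (Set.image_mono (fun β hβ => hT β (Finset.mem_coe.mp hβ))) hmul
      have h2 : h ∈ Ideal.span (f '' {β | lt β μ}) := hreg μ h h1
      obtain ⟨t, ht1, ht2⟩ := Submodule.mem_span_finite_of_mem_span h2
      obtain ⟨E, hE1, hE2⟩ := Finset.subset_set_image_iff.mp ht1
      have h3 : h ∈ Ideal.span (f '' ↑(T ∪ E)) := by
        refine Ideal.span_mono ?_ (by rwa [← hE2, Finset.coe_image] at ht2)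
        refine Set.image_mono ?_
        intro β hβ
        exact Finset.mem_coe.mpr (Finset.mem_union_right T (Finset.mem_coe.mp hβ))
      exact claim E hE1 h hmem hmul h3
    -- extend hS to non-homogeneous elements
    have hA : ∀ T : Finset Ω, (∀ β ∈ T, lt β μ) →
        ∀ h : R, h * f μ ∈ Ideal.span (f '' ↑T) → h ∈ Ideal.span (f '' ↑T) := by
      intro T hT h hmul
      obtain ⟨dμ, hdμ0, hfμ⟩ := hhom μ
      have hIh := hIhom T
      rw [Ideal.IsHomogeneous.mem_iff 𝒜 hIh]
      intro i
      refine hS i T hT _ (SetLike.coe_mem _) ?_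
      have e : ((decompose 𝒜 h i : R)) * f μ = (decompose 𝒜 (h * f μ) (i + dμ) : R) := by
        rw [DirectSum.coe_decompose_mul_of_right_mem_of_le 𝒜 hfμ (Nat.le_add_left _ _),
          Nat.add_sub_cancel]
      rw [e]
      exact hIh _ hmul
    -- now the general statement for `α ≤ μ`
    intro α T hαT hbound h hmul
    by_cases hαμ : α = μ
    · subst hαμ
      refine hA T ?_ h hmul
      intro β hβ
      rcases hbound β (Finset.mem_insert_of_mem hβ) with hb | hb
      · exact hb
      · exact absurd (hb ▸ hβ) hαT
    · have hαlt : lt α μ := (hbound α (Finset.mem_insert_self _ _)).resolve_right hαμ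
      by_cases hμT : μ ∈ T
      · set T₀ := T.erase μ with hT₀def
        have hTeq : insert μ T₀ = T := Finset.insert_erase hμT
        have hT₀lt : ∀ β ∈ T₀, lt β μ := by
          intro β hβ
          rcases hbound β (Finset.mem_insert_of_mem (Finset.erase_subset _ _ hβ)) with hb | hb
          · exact hb
          · exact absurd hb (Finset.ne_of_mem_erase hβ)
        have hαT₀ : α ∉ T₀ := fun hmem => hαT (Finset.erase_subset _ _ hmem)
        set I := Ideal.span (f '' ↑T₀) with hIdef
        -- K1 : f α is regular mod I
        have hne1 : (insert α T₀).Nonempty := ⟨α, Finset.mem_insert_self _ _⟩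
        set ν₁ := (insert α T₀).max' hne1 with hν₁def
        have hν₁lt : lt ν₁ μ := by
          rcases Finset.mem_insert.mp (Finset.max'_mem _ hne1) with hb | hb
          · rw [hν₁def, hb]; exact hαlt
          · exact hT₀lt _ hb
        have hbound₁ : ∀ β ∈ insert α T₀, lt β ν₁ ∨ β = ν₁ := by
          intro β hβ
          rcases lt_or_eq_of_le (Finset.le_max' _ β hβ) with hb | hb
          · exact Or.inl hb
          · exact Or.inr hb
        have K1 : ∀ g : R, g * f α ∈ I → g ∈ I := IH ν₁ hν₁lt α T₀ hαT₀ hbound₁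
        -- K2 : f μ is regular mod I + (f α)
        have hins : ∀ β ∈ insert α T₀, lt β μ := by
          intro β hβ
          rcases Finset.mem_insert.mp hβ with hb | hb
          · exact hb ▸ hαlt
          · exact hT₀lt _ hb
        have K2 : ∀ g : R, g * f μ ∈ Ideal.span (f '' ↑(insert α T₀)) →
            g ∈ Ideal.span (f '' ↑(insert α T₀)) := hA (insert α T₀) hins
        have hspan1 : Ideal.span (f '' ↑(insert α T₀)) = Ideal.span {f α} ⊔ I := by
          rw [Finset.coe_insert, Set.image_insert_eq, Ideal.span_insert]
        have hspanT : Ideal.span (f '' ↑T) = Ideal.span {f μ} ⊔ I := by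
          rw [← hTeq, Finset.coe_insert, Set.image_insert_eq, Ideal.span_insert]
        rw [hspanT] at hmul ⊢
        obtain ⟨z, hz, i₀, hi₀, hzi⟩ := Submodule.mem_sup.mp hmul
        obtain ⟨a, ha⟩ := Ideal.mem_span_singleton'.mp hz
        have haμ : a * f μ ∈ Ideal.span {f α} ⊔ I := by
          have e : a * f μ = h * f α - i₀ := by rw [ha, ← hzi]; ring
          rw [e]
          exact Submodule.sub_mem _
            (Submodule.mem_sup_left (Ideal.mem_span_singleton'.mpr ⟨h, rfl⟩))
            (Submodule.mem_sup_right hi₀)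
        have ha2 := K2 a (by rw [hspan1]; exact haμ)
        rw [hspan1] at ha2
        obtain ⟨w, hw, i₁, hi₁, hwi⟩ := Submodule.mem_sup.mp ha2
        obtain ⟨b, hb⟩ := Ideal.mem_span_singleton'.mp hw
        have hKey : (h - b * f μ) * f α ∈ I := by
          have e : h * f α = (b * f α + i₁) * f μ + i₀ := by
            rw [← hzi, ← ha, ← hwi, ← hb]
          have e2 : (h - b * f μ) * f α = i₁ * f μ + i₀ := by linear_combination e
          rw [e2]
          exact Submodule.add_mem _ (Ideal.mul_mem_right _ _ hi₁) hi₀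
        have hfin : h - b * f μ ∈ I := K1 _ hKey
        have e3 : h = b * f μ + (h - b * f μ) := by ring
        rw [e3]
        exact Submodule.add_mem _
          (Submodule.mem_sup_left (Ideal.mem_span_singleton'.mpr ⟨b, rfl⟩))
          (Submodule.mem_sup_right hfin)
      · -- μ ∉ T : everything is strictly below μ, use the well-founded IH
        have hall : ∀ β ∈ insert α T, lt β μ := by
          intro β hβ
          rcases hbound β hβ with hb | hb
          · exact hb
          · subst hb
            rcases Finset.mem_insert.mp hβ with hb | hb
            · exact absurd hb.symm hαμ
            · exact absurd hb hμT
        have hne2 : (insert α T).Nonempty := ⟨α, Finset.mem_insert_self _ _⟩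
        set ν := (insert α T).max' hne2 with hνdef
        have hνlt : lt ν μ := hall _ (Finset.max'_mem _ hne2)
        have hbound' : ∀ β ∈ insert α T, lt β ν ∨ β = ν := by
          intro β hβ
          rcases lt_or_eq_of_le (Finset.le_max' _ β hβ) with hb | hb
          · exact Or.inl hb
          · exact Or.inr hb
        exact IH ν hνlt α T hαT hbound' h hmul
  intro α T hαT h hmul
  have hne : (insert α T).Nonempty := ⟨α, Finset.mem_insert_self _ _⟩
  refine key ((insert α T).max' hne) α T hαT ?_ h hmul
  intro β hβ
  rcases lt_or_eq_of_le (Finset.le_max' _ β hβ) with hb | hb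
  · exact Or.inl hb
  · exact Or.inr hb

/-- Theorem 1.21: in a non-negatively graded commutative ring, a family of homogeneous
elements of positive degree indexed by a well-ordered set is a regular sequence if and
only if it satisfies the FR-condition; in particular any permutation of a homogeneous
regular sequence is again a regular sequence. -/
theorem isRegularSeq_iff_satisfiesFR {R : Type*} [CommRing R]
    (𝒜 : ℕ → AddSubmonoid R) [GradedRing 𝒜]
    {Ω : Type*} (lt : Ω → Ω → Prop) (hwo : IsWellOrder Ω lt)
    (f : Ω → R) (hhom : ∀ α, ∃ n, 0 < n ∧ f α ∈ 𝒜 n) :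
    (IsRegularSeq lt f ↔ SatisfiesFR lt f) ∧
    (∀ (Ω' : Type*) (lt' : Ω' → Ω' → Prop), IsWellOrder Ω' lt' →
      ∀ e : Ω' ≃ Ω, IsRegularSeq lt f → IsRegularSeq lt' (fun α' => f (e α'))) := by
  classical
  haveI := hwo
  letI : LinearOrder Ω := IsWellOrder.linearOrder lt
  constructor
  · constructor
    · -- regular → FR
      rintro ⟨hne, hreg⟩ n α hinc
      have MAIN := main_reg_aux 𝒜 lt hwo f hhom hreg
      constructor
      · intro htop
        apply hne
        have hle : Ideal.span (Set.range fun i => f (α i)) ≤ Ideal.span (Set.range f) :=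
          Ideal.span_mono (by rintro x ⟨i, rfl⟩; exact ⟨α i, rfl⟩)
        exact top_le_iff.mp (htop ▸ hle)
      · intro i h hmul
        set T : Finset Ω := (Finset.Iio i).image α with hTdef
        have himg : ((fun j => f (α j)) '' {j | j < i}) = f '' ↑T := by
          rw [hTdef, Finset.coe_image, Finset.coe_Iio, Set.image_image]
          rfl
        have hαiT : α i ∉ T := by
          simp only [hTdef, Finset.mem_image, Finset.mem_Iio]
          rintro ⟨j, hj, hji⟩
          have hlt := hinc j i hj
          rw [hji] at hlt
          exact irrefl_of lt (α i) hlt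
        rw [himg] at hmul ⊢
        exact MAIN (α i) T hαiT h hmul
    · -- FR → regular
      intro hFR
      constructor
      · intro htop
        have h1 : (1 : R) ∈ Ideal.span (Set.range f) := htop ▸ Submodule.mem_top
        obtain ⟨t, ht1, ht2⟩ := Submodule.mem_span_finite_of_mem_span h1
        rw [← Set.image_univ] at ht1
        obtain ⟨E, -, hE2⟩ := Finset.subset_set_image_iff.mp ht1
        set φ := E.orderIsoOfFin rfl with hφdef
        have hinc : ∀ i j : Fin E.card, i < j → lt ((φ i : Ω)) ((φ j : Ω)) := by
          intro i j hij
          exact Subtype.coe_lt_coe.mpr (φ.strictMono hij)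
        obtain ⟨hne', -⟩ := hFR E.card (fun i => (φ i : Ω)) hinc
        apply hne'
        have hrange : Set.range (fun i : Fin E.card => ((φ i : Ω))) = ↑E := by
          ext x
          simp only [Set.mem_range, Finset.mem_coe]
          constructor
          · rintro ⟨i, rfl⟩; exact (φ i).2
          · intro hx; exact ⟨φ.symm ⟨x, hx⟩, by simp⟩
        have heq : Set.range (fun i : Fin E.card => f ((φ i : Ω))) = ↑t := by
          rw [show (fun i : Fin E.card => f ((φ i : Ω)))
              = f ∘ (fun i : Fin E.card => ((φ i : Ω))) from rfl,
            Set.range_comp, hrange, ← hE2, Finset.coe_image]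
        rw [Ideal.eq_top_iff_one, heq]
        exact ht2
      · intro α₀ h hmul
        obtain ⟨t, ht1, ht2⟩ := Submodule.mem_span_finite_of_mem_span hmul
        obtain ⟨E, hE1, hE2⟩ := Finset.subset_set_image_iff.mp ht1
        have hα₀E : α₀ ∉ E := fun hmem => irrefl_of lt α₀ (hE1 hmem)
        set E' : Finset Ω := insert α₀ E with hE'def
        set φ := E'.orderIsoOfFin rfl with hφdef
        have hinc : ∀ i j : Fin E'.card, i < j → lt ((φ i : Ω)) ((φ j : Ω)) := by
          intro i j hij
          exact Subtype.coe_lt_coe.mpr (φ.strictMono hij)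
        obtain ⟨-, hreg'⟩ := hFR E'.card (fun i => (φ i : Ω)) hinc
        set imax := φ.symm ⟨α₀, Finset.mem_insert_self _ _⟩ with himaxdef
        have hφmax : (φ imax : Ω) = α₀ := by
          rw [himaxdef, OrderIso.apply_symm_apply]
        have hset : ((fun i : Fin E'.card => f ((φ i : Ω))) '' {j | j < imax}) = f '' ↑E := by
          ext x
          constructor
          · rintro ⟨j, hj, rfl⟩
            refine ⟨(φ j : Ω), ?_, rfl⟩
            have h1 : (φ j : Ω) ∈ E' := (φ j).2
            have h2 : (φ j : Ω) ≠ α₀ := by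
              intro heq
              have : φ j = φ imax := Subtype.ext (heq.trans hφmax.symm)
              have : j = imax := φ.injective this
              exact absurd (this ▸ hj) (lt_irrefl imax)
            exact Finset.mem_coe.mpr (Finset.mem_of_mem_insert_of_ne h1 h2)
          · rintro ⟨β, hβ, rfl⟩
            have hβE : β ∈ E := Finset.mem_coe.mp hβ
            have hβE' : β ∈ E' := Finset.mem_insert_of_mem hβE
            refine ⟨φ.symm ⟨β, hβE'⟩, ?_, by simp⟩
            show φ.symm ⟨β, hβE'⟩ < imax
            rw [himaxdef]
            apply (OrderIso.lt_iff_lt φ.symm).mpr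
            exact Subtype.mk_lt_mk.mpr (hE1 hβ)
        have hmul' : h * f ((φ imax : Ω)) ∈
            Ideal.span ((fun i : Fin E'.card => f ((φ i : Ω))) '' {j | j < imax}) := by
          rw [hφmax, hset]
          have : (↑t : Set R) = f '' ↑E := by rw [← hE2, Finset.coe_image]
          rw [← this]
          exact ht2
        have hout := hreg' imax h hmul'
        rw [hset] at hout
        exact Ideal.span_mono (Set.image_mono hE1) hout
  · -- permutations
    rintro Ω' lt' hwo' e ⟨hne, hreg⟩
    haveI := hwo'
    have MAIN := main_reg_aux 𝒜 lt hwo f hhom hreg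
    constructor
    · intro htop
      apply hne
      have hrange : Set.range (fun α' => f (e α')) = Set.range f := by
        ext x
        constructor
        · rintro ⟨i, rfl⟩; exact ⟨e i, rfl⟩
        · rintro ⟨β, rfl⟩; exact ⟨e.symm β, by simp⟩
      rwa [hrange] at htop
    · intro α' h hmul
      have himg : ((fun b => f (e b)) '' {β' | lt' β' α'}) = f '' (e '' {β' | lt' β' α'}) :=
        (Set.image_image f e _).symm
      rw [himg] at hmul ⊢
      obtain ⟨t, ht1, ht2⟩ := Submodule.mem_span_finite_of_mem_span hmul
      obtain ⟨E, hE1, hE2⟩ := Finset.subset_set_image_iff.mp ht1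
      have hnot : e α' ∉ E := by
        intro hmem
        obtain ⟨β', hβ', heq⟩ := hE1 hmem
        have : β' = α' := e.injective heq
        exact irrefl_of lt' α' (this ▸ hβ')
      have h2 := MAIN (e α') E hnot h (by
        rw [show Ideal.span (f '' ↑E) = Ideal.span ↑t from by rw [← hE2, Finset.coe_image]]
        exact ht2)
      exact Ideal.span_mono (Set.image_mono hE1) h2

end
end

section
/- Let T be a set of non-constant monomials in S, indexed (in any way) by a well-ordered set. Then T is a regular sequence on S if and only if any two distinct monomials μ₁, μ₂ ∈ T are coprime, i.e. have no common divisor except units. -/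
open MvPolynomial

noncomputable section

/-!
A polynomial lies in a monomial ideal iff each of its exponents dominates the exponent of some
generator. Hence `x^c` is a non-zerodivisor modulo `(x^t : t ∈ T)` iff every `s` with `s + c`
above some `t ∈ T` is itself above some `t' ∈ T`, a condition on exponents only, which holds as
soon as `c` is disjoint from every `t ∈ T`. Conversely, if `α < β` and `m := a α ⊓ a β ≠ 0`, then
`x^(a α - m) · x^(a β)` is a multiple of `x^(a α)`, so regularity at `β` gives an earlier `a γ`
below `a α - m < a α`; well-founded induction on `β` shows that this cannot happen.
-/

namespace MvPolynomial

variable {σ R : Type*}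

section CommSemiring

variable [CommSemiring R] [Nontrivial R]

theorem monomial_one_mem_ideal_span_monomial_image {s : σ →₀ ℕ} {T : Set (σ →₀ ℕ)} :
    monomial s (1 : R) ∈ Ideal.span ((fun t => monomial t (1 : R)) '' T) ↔ ∃ t ∈ T, t ≤ s := by
  classical
  simp [mem_ideal_span_monomial_image, support_monomial]

theorem ideal_span_monomial_image_ne_top_iff {T : Set (σ →₀ ℕ)} :
    Ideal.span ((fun t => monomial t (1 : R)) '' T) ≠ ⊤ ↔ 0 ∉ T := by
  rw [ne_eq, Ideal.eq_top_iff_one, one_def, monomial_one_mem_ideal_span_monomial_image]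
  simp

theorem forall_mem_of_mul_monomial_mem_iff {T : Set (σ →₀ ℕ)} {c : σ →₀ ℕ} :
    (∀ h : MvPolynomial σ R, h * monomial c 1 ∈ Ideal.span ((fun t => monomial t 1) '' T) →
        h ∈ Ideal.span ((fun t => monomial t 1) '' T)) ↔
      ∀ s, (∃ t ∈ T, t ≤ s + c) → ∃ t ∈ T, t ≤ s := by
  constructor
  · intro h s hs
    rw [← monomial_one_mem_ideal_span_monomial_image (R := R)]
    apply h
    rwa [monomial_mul, one_mul, monomial_one_mem_ideal_span_monomial_image]
  · intro h p hp
    rw [mem_ideal_span_monomial_image] at hp ⊢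
    intro s hs
    refine h s (hp (s + c) ?_)
    rwa [mem_support_iff, coeff_mul_monomial, mul_one, ← mem_support_iff]

end CommSemiring

theorem isRelPrime_monomial_one_iff [CommRing R] [IsDomain R] [UniqueFactorizationMonoid R]
    {a b : σ →₀ ℕ} : IsRelPrime (monomial a (1 : R)) (monomial b 1) ↔ a ⊓ b = 0 := by
  classical
  rw [← Finsupp.support_eq_empty, Finsupp.support_inf]
  constructor
  · intro h
    by_contra hab
    obtain ⟨i, hi⟩ := Finset.nonempty_iff_ne_empty.2 hab
    rw [Finset.mem_inter, Finsupp.mem_support_iff, Finsupp.mem_support_iff] at hi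
    exact X_prime.not_isUnit (h (X_dvd_monomial.2 (.inr hi.1)) (X_dvd_monomial.2 (.inr hi.2)))
  · intro hab
    simp only [monomial_eq, C_1, one_mul, Finsupp.prod]
    refine IsRelPrime.prod_left fun i hi => IsRelPrime.prod_right fun j hj => ?_
    have hij : i ≠ j := by
      rintro rfl
      exact Finset.notMem_empty i (hab ▸ Finset.mem_inter.2 ⟨hi, hj⟩)
    exact (X_prime.irreducible.isRelPrime_iff_not_dvd.2 (X_dvd_X.not.2 hij)).pow_left.pow_right

end MvPolynomial

theorem Finsupp.le_of_le_add_of_inf_eq_zero {σ : Type*} {s t c : σ →₀ ℕ} (hle : t ≤ s + c)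
    (htc : t ⊓ c = 0) : t ≤ s := by
  intro i
  have h₁ := hle i
  have h₂ := DFunLike.congr_fun htc i
  simp only [Finsupp.add_apply, Finsupp.inf_apply, Finsupp.coe_zero, Pi.zero_apply] at h₁ h₂
  omega

theorem Pairwise.of_rel_of_trichotomous {Ω : Type*} {lt r : Ω → Ω → Prop} [Std.Trichotomous lt]
    (hr : ∀ ⦃α β⦄, r α β → r β α) (h : ∀ ⦃α β⦄, lt α β → r α β) : Pairwise r := by
  intro α β hne
  rcases trichotomous_of lt α β with hlt | heq | hgt
  · exact h hlt
  · exact absurd heq hne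
  · exact hr (h hgt)

theorem isRegularSeq_monomial_iff {σ R Ω : Type*} [CommRing R] [Nontrivial R]
    (lt : Ω → Ω → Prop) (a : Ω → σ →₀ ℕ) :
    IsRegularSeq lt (fun α => monomial (a α) (1 : R)) ↔
      (∀ α, a α ≠ 0) ∧ ∀ β s, (∃ γ, lt γ β ∧ a γ ≤ s + a β) → ∃ γ, lt γ β ∧ a γ ≤ s := by
  have himage (S : Set Ω) : (fun α => monomial (a α) (1 : R)) '' S =
      (fun t => monomial t 1) '' (a '' S) :=
    (Set.image_image (fun t => monomial t (1 : R)) a S).symm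
  simp only [IsRegularSeq, ← Set.image_univ, himage, ideal_span_monomial_image_ne_top_iff,
    forall_mem_of_mul_monomial_mem_iff]
  simp

section Exponents

variable {σ Ω : Type*} {lt : Ω → Ω → Prop} {a : Ω → σ →₀ ℕ}

theorem pairwise_inf_eq_zero_of_forall_exists_le [IsWellOrder Ω lt] (ha : ∀ α, a α ≠ 0)
    (hreg : ∀ β s, (∃ γ, lt γ β ∧ a γ ≤ s + a β) → ∃ γ, lt γ β ∧ a γ ≤ s) :
    Pairwise fun α β => a α ⊓ a β = 0 := by
  have hsymm : ∀ ⦃α β⦄, a α ⊓ a β = 0 → a β ⊓ a α = 0 := fun α β h => inf_comm (a α) (a β) ▸ h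
  refine Pairwise.of_rel_of_trichotomous (lt := lt) hsymm fun α β hαβ => ?_
  induction β using IsWellFounded.induction lt generalizing α with
  | _ β IH =>
  have hbelow : ∀ γ, lt γ β → γ ≠ α → a γ ⊓ a α = 0 := fun γ hγ hne =>
    Pairwise.of_rel_of_trichotomous (lt := lt) (r := fun γ α => lt γ β → lt α β → a γ ⊓ a α = 0)
      (fun _ _ h h₁ h₂ => hsymm (h h₂ h₁)) (fun _ α h _ hα => IH α hα _ h) hne hγ hαβ
  by_contra hm
  set m := a α ⊓ a β
  obtain ⟨γ, hγβ, hγ⟩ :=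
    hreg β (a α - m) ⟨α, hαβ, le_tsub_add.trans (add_le_add le_rfl inf_le_right)⟩
  by_cases hγα : γ = α
  · rw [hγα, le_tsub_iff_right inf_le_left, add_le_iff_nonpos_right, nonpos_iff_eq_zero] at hγ
    exact hm hγ
  · exact ha γ (inf_eq_left.2 (hγ.trans tsub_le_self) ▸ hbelow γ hγβ hγα)

theorem forall_exists_le_of_pairwise_inf_eq_zero [Std.Irrefl lt]
    (h : Pairwise fun α β => a α ⊓ a β = 0) (β : Ω) (s : σ →₀ ℕ) :
    (∃ γ, lt γ β ∧ a γ ≤ s + a β) → ∃ γ, lt γ β ∧ a γ ≤ s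
  | ⟨γ, hγβ, hγ⟩ => ⟨γ, hγβ, Finsupp.le_of_le_add_of_inf_eq_zero hγ (h (ne_of_irrefl hγβ))⟩

end Exponents

theorem monomials_regular_iff_coprime_general {k : Type*} [Field k] {Ω : Type*}
    (lt : Ω → Ω → Prop) (hwo : IsWellOrder Ω lt)
    (a : Ω → (ℕ →₀ ℕ)) (ha : ∀ α, a α ≠ 0) :
    IsRegularSeq lt (fun α => (monomial (a α) 1 : MvPolynomial ℕ k)) ↔
      ∀ α β, α ≠ β → ∀ d : MvPolynomial ℕ k,
        d ∣ monomial (a α) 1 → d ∣ monomial (a β) 1 → IsUnit d := by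
  change _ ↔ Pairwise fun α β => IsRelPrime (monomial (a α) (1 : k)) (monomial (a β) 1)
  simp only [isRegularSeq_monomial_iff, isRelPrime_monomial_one_iff, ne_eq, ha, not_false_eq_true,
    implies_true, true_and]
  have := hwo
  exact ⟨pairwise_inf_eq_zero_of_forall_exists_le ha, forall_exists_le_of_pairwise_inf_eq_zero⟩

/-- Lemma 1.22(1): a family of distinct non-constant monomials in `S = k[x₁,x₂,…]`,
indexed by a well-ordered set, is a regular sequence on `S` if and only if any two
distinct monomials among them have no common divisor except units. -/
theorem monomials_regular_iff_coprime {k : Type*} [Field k] {Ω : Type*}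
    (lt : Ω → Ω → Prop) (hwo : IsWellOrder Ω lt)
    (a : Ω → (ℕ →₀ ℕ)) (ha : ∀ α, a α ≠ 0) (hinj : Function.Injective a) :
    IsRegularSeq lt (fun α => (monomial (a α) 1 : MvPolynomial ℕ k)) ↔
      ∀ α β, α ≠ β → ∀ d : MvPolynomial ℕ k,
        d ∣ monomial (a α) 1 → d ∣ monomial (a β) 1 → IsUnit d :=
  monomials_regular_iff_coprime_general lt hwo a ha

end
end
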